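/- arXiv:2103.04737 — 6 statements merged into one kernel-verified Lean document; each statement's English description precedes it below -/
import Mathlib

section
/- Let a ∈ Δ_n^* and b ∈ Δ_m^* and let r ≥ 1. Then ⋃_{g ∈ Δ_r^*} Π_{a,g,b} = Π_{a,b}(r); that is, a matrix P ∈ ℝ_{≥0}^{n×m} belongs to Π_{a,b} and has nonnegative rank at most r if and only if there exist g ∈ Δ_r^*, Q ∈ Π_{a,g} and R ∈ Π_{b,g} such that P = Q Diag(1/g) Rᵀ. -/
open Matrix Finset Real
open scoped RealInnerProductSpace

noncomputable section

/-- Real matrices indexed by `Fin n × Fin m`. -/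
abbrev Mat (n m : ℕ) : Type := Matrix (Fin n) (Fin m) ℝ

/-- Triples `(Q, R, g)` as in the low-rank OT factorization. -/
abbrev LRTriple (n m r : ℕ) : Type := Mat n r × Mat m r × (Fin r → ℝ)

/-- Pairs `(Q, R)` (fixed middle marginal `g`). -/
abbrev LRPair (n m r : ℕ) : Type := Mat n r × Mat m r

/-- The interior of the probability simplex Δ_n^*: strictly positive entries summing to 1. -/
def posSimplex (n : ℕ) : Set (Fin n → ℝ) := {a | (∀ i, 0 < a i) ∧ ∑ i, a i = 1}

/-- Frobenius inner product ⟨C, P⟩ = Σ_{ij} C_ij P_ij. -/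
def frobInner {n m : ℕ} (C P : Mat n m) : ℝ := ∑ i, ∑ j, C i j * P i j

/-- Entropy H(P) = −Σ_{ij} P_ij (log P_ij − 1) (with 0 log 0 = 0, as `Real.log 0 = 0`). -/
def matH {n m : ℕ} (P : Mat n m) : ℝ := -∑ i, ∑ j, P i j * (Real.log (P i j) - 1)

/-- Entropy of a vector. -/
def vecH {r : ℕ} (g : Fin r → ℝ) : ℝ := -∑ i, g i * (Real.log (g i) - 1)

/-- Kullback–Leibler divergence KL(P,Q) = Σ_{ij} P_ij (log(P_ij/Q_ij) − 1). -/
def matKL {n m : ℕ} (P Q : Mat n m) : ℝ := ∑ i, ∑ j, P i j * (Real.log (P i j / Q i j) - 1)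

/-- Kullback–Leibler divergence of vectors. -/
def vecKL {r : ℕ} (p q : Fin r → ℝ) : ℝ := ∑ i, p i * (Real.log (p i / q i) - 1)

/-- KL divergence on triples, summing over the three components. -/
def tripleKL {n m r : ℕ} (x y : LRTriple n m r) : ℝ :=
  matKL x.1 y.1 + matKL x.2.1 y.2.1 + vecKL x.2.2 y.2.2

/-- KL divergence on pairs, summing over the two components. -/
def pairKL {n m r : ℕ} (x y : LRPair n m r) : ℝ := matKL x.1 y.1 + matKL x.2 y.2

/-- Euclidean inner product on triples. -/
def tripleInner {n m r : ℕ} (x y : LRTriple n m r) : ℝ :=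
  frobInner x.1 y.1 + frobInner x.2.1 y.2.1 + ∑ i, x.2.2 i * y.2.2 i

/-- Euclidean inner product on pairs. -/
def pairInner {n m r : ℕ} (x y : LRPair n m r) : ℝ := frobInner x.1 y.1 + frobInner x.2 y.2

/-- Squared Euclidean norm of a triple (Frobenius on matrix blocks). -/
def tripleNormSq {n m r : ℕ} (x : LRTriple n m r) : ℝ :=
  (∑ i, ∑ j, (x.1 i j) ^ 2) + (∑ i, ∑ j, (x.2.1 i j) ^ 2) + ∑ i, (x.2.2 i) ^ 2

/-- Squared Euclidean norm of a pair (Frobenius on matrix blocks). -/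
def pairNormSq {n m r : ℕ} (x : LRPair n m r) : ℝ :=
  (∑ i, ∑ j, (x.1 i j) ^ 2) + (∑ i, ∑ j, (x.2 i j) ^ 2)

/-- The transport polytope Π_{a,b} of couplings with marginals `a` and `b`. -/
def couplings {n m : ℕ} (a : Fin n → ℝ) (b : Fin m → ℝ) : Set (Mat n m) :=
  {P | (∀ i j, 0 ≤ P i j) ∧ (∀ i, ∑ j, P i j = a i) ∧ (∀ j, ∑ i, P i j = b j)}

/-- The nonnegative rank: smallest `q` such that `M` is a sum of `q` nonnegative
rank-one matrices. -/
def nonnegRank {n m : ℕ} (M : Mat n m) : ℕ :=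
  sInf {q : ℕ | ∃ f : Fin q → Mat n m,
    (∀ i, (f i).rank = 1 ∧ ∀ k l, 0 ≤ f i k l) ∧ M = ∑ i, f i}

/-- Π_{a,b}(r): couplings with nonnegative rank at most `r`. -/
def couplingsRank {n m : ℕ} (a : Fin n → ℝ) (b : Fin m → ℝ) (r : ℕ) : Set (Mat n m) :=
  {P | P ∈ couplings a b ∧ nonnegRank P ≤ r}

/-- 𝒞₁(a,b,r): `Q, R` nonnegative with row sums `a`, `b`, and `g > 0`. -/
def C1set {n m : ℕ} (a : Fin n → ℝ) (b : Fin m → ℝ) (r : ℕ) : Set (LRTriple n m r) :=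
  {x | (∀ i j, 0 ≤ x.1 i j) ∧ (∀ i j, 0 ≤ x.2.1 i j) ∧ (∀ i, 0 < x.2.2 i) ∧
    (∀ i, ∑ j, x.1 i j = a i) ∧ (∀ i, ∑ j, x.2.1 i j = b i)}

/-- The closure of 𝒞₁(a,b,r): as 𝒞₁ but only `g ≥ 0`. -/
def C1barSet {n m : ℕ} (a : Fin n → ℝ) (b : Fin m → ℝ) (r : ℕ) : Set (LRTriple n m r) :=
  {x | (∀ i j, 0 ≤ x.1 i j) ∧ (∀ i j, 0 ≤ x.2.1 i j) ∧ (∀ i, 0 ≤ x.2.2 i) ∧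
    (∀ i, ∑ j, x.1 i j = a i) ∧ (∀ i, ∑ j, x.2.1 i j = b i)}

/-- 𝒞₁(a,b,r,α): as 𝒞₁ but with the lower bound `g ≥ α`. -/
def C1setAlpha {n m : ℕ} (a : Fin n → ℝ) (b : Fin m → ℝ) (r : ℕ) (α : ℝ) :
    Set (LRTriple n m r) :=
  {x | (∀ i j, 0 ≤ x.1 i j) ∧ (∀ i j, 0 ≤ x.2.1 i j) ∧ (∀ i, α ≤ x.2.2 i) ∧
    (∀ i, ∑ j, x.1 i j = a i) ∧ (∀ i, ∑ j, x.2.1 i j = b i)}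

/-- 𝒞₂(r): `Q, R, g` nonnegative with both column sums equal to `g`. -/
def C2set {n m : ℕ} (r : ℕ) : Set (LRTriple n m r) :=
  {x | (∀ i j, 0 ≤ x.1 i j) ∧ (∀ i j, 0 ≤ x.2.1 i j) ∧ (∀ i, 0 ≤ x.2.2 i) ∧
    (∀ j, ∑ i, x.1 i j = x.2.2 j) ∧ (∀ j, ∑ i, x.2.1 i j = x.2.2 j)}

/-- 𝒞(a,b,r) = 𝒞₁(a,b,r) ∩ 𝒞₂(r). -/
def Cset {n m : ℕ} (a : Fin n → ℝ) (b : Fin m → ℝ) (r : ℕ) : Set (LRTriple n m r) :=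
  C1set a b r ∩ C2set r

/-- 𝒞(a,b,r,α) = 𝒞₁(a,b,r,α) ∩ 𝒞₂(r). -/
def CsetAlpha {n m : ℕ} (a : Fin n → ℝ) (b : Fin m → ℝ) (r : ℕ) (α : ℝ) :
    Set (LRTriple n m r) :=
  C1setAlpha a b r α ∩ C2set r

/-- F_ε(Q,R,g) = ⟨C, Q Diag(1/g) Rᵀ⟩ − ε H((Q,R,g)). -/
def Fobj {n m r : ℕ} (C : Mat n m) (ε : ℝ) (x : LRTriple n m r) : ℝ :=
  frobInner C (x.1 * Matrix.diagonal (fun i => (x.2.2 i)⁻¹) * x.2.1ᵀ) -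
    ε * (matH x.1 + matH x.2.1 + vecH x.2.2)

/-- LOT_{r,ε} = inf of F_ε over 𝒞(a,b,r). -/
def LOTre {n m : ℕ} (a : Fin n → ℝ) (b : Fin m → ℝ) (C : Mat n m) (ε : ℝ) (r : ℕ) : ℝ :=
  sInf (Fobj C ε '' Cset a b r)

/-- LOT_{r,ε,α} = inf of F_ε over 𝒞(a,b,r,α). -/
def LOTreAlpha {n m : ℕ} (a : Fin n → ℝ) (b : Fin m → ℝ) (C : Mat n m) (ε : ℝ) (r : ℕ)
    (α : ℝ) : ℝ :=
  sInf (Fobj C ε '' CsetAlpha a b r α)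

/-- Spectral norm (ℓ²→ℓ² operator norm) of a matrix. -/
def specNorm {n m : ℕ} (C : Mat n m) : ℝ :=
  ‖LinearMap.toContinuousLinearMap (Matrix.toEuclideanLin C)‖

/-- The gradient ∇F_ε(Q,R,g) =
(C R Diag(1/g) + ε log Q, Cᵀ Q Diag(1/g) + ε log R, −𝒟(Qᵀ C R)/g² + ε log g). -/
def gradF {n m r : ℕ} (C : Mat n m) (ε : ℝ) (x : LRTriple n m r) : LRTriple n m r :=
  (Matrix.of fun i k => (C * x.2.1) i k * (x.2.2 k)⁻¹ + ε * Real.log (x.1 i k),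
   Matrix.of fun j k => (Cᵀ * x.1) j k * (x.2.2 k)⁻¹ + ε * Real.log (x.2.1 j k),
   fun k => -((x.1ᵀ * C * x.2.1) k k) / (x.2.2 k) ^ 2 + ε * Real.log (x.2.2 k))

/-- Entrywise logarithm of a triple. -/
def logTriple {n m r : ℕ} (x : LRTriple n m r) : LRTriple n m r :=
  (Matrix.of fun i k => Real.log (x.1 i k), Matrix.of fun j k => Real.log (x.2.1 j k),
   fun k => Real.log (x.2.2 k))

/-- The feasible set Π_{a,g} × Π_{b,g}. -/
def pairFeasible {n m r : ℕ} (a : Fin n → ℝ) (b : Fin m → ℝ) (g : Fin r → ℝ) :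
    Set (LRPair n m r) :=
  {u | u.1 ∈ couplings a g ∧ u.2 ∈ couplings b g}

/-- f_ε(Q,R) = ⟨C, Q Diag(1/g) Rᵀ⟩ − ε (H(Q) + H(R)) for fixed `g`. -/
def fobj {n m r : ℕ} (C : Mat n m) (g : Fin r → ℝ) (ε : ℝ) (x : LRPair n m r) : ℝ :=
  frobInner C (x.1 * Matrix.diagonal (fun i => (g i)⁻¹) * x.2ᵀ) - ε * (matH x.1 + matH x.2)

/-- LOT_{r,g,ε} = inf of f_ε over Π_{a,g} × Π_{b,g}. -/
def LOTfix {n m r : ℕ} (a : Fin n → ℝ) (b : Fin m → ℝ) (g : Fin r → ℝ) (C : Mat n m)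
    (ε : ℝ) : ℝ :=
  sInf (fobj C g ε '' pairFeasible a b g)

/-- The gradient ∇f_ε(Q,R) = (C R Diag(1/g) + ε log Q, Cᵀ Q Diag(1/g) + ε log R). -/
def gradf {n m r : ℕ} (C : Mat n m) (g : Fin r → ℝ) (ε : ℝ) (x : LRPair n m r) :
    LRPair n m r :=
  (Matrix.of fun i k => (C * x.2) i k * (g k)⁻¹ + ε * Real.log (x.1 i k),
   Matrix.of fun j k => (Cᵀ * x.1) j k * (g k)⁻¹ + ε * Real.log (x.2 j k))

/-- Entrywise logarithm of a pair. -/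
def logPair {n m r : ℕ} (x : LRPair n m r) : LRPair n m r :=
  (Matrix.of fun i k => Real.log (x.1 i k), Matrix.of fun j k => Real.log (x.2 j k))

end

/-!
A nonnegative rank-one matrix `u vᵀ` is the outer product of its row sums and its column sums
divided by its total mass. Hence a decomposition `P = ∑ₖ Pₖ` into `r` nonnegative rank-one
terms yields the factorization, with `Q` and `R` collecting the row and column sums of the `Pₖ`
and `g` their masses; the marginals of `P` pass to `Q` and `R`. Conversely `Q Diag(1/g) Rᵀ` is
the sum of the `r` rank-one terms `Q₍·ₖ₎ R₍·ₖ₎ᵀ / gₖ`. A decomposition with fewer than `r` terms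
is padded to exactly `r` by halving one term, which keeps every `gₖ` positive.
-/

namespace Matrix

variable {K ι κ ρ : Type*}

lemma mul_diagonal_mul_transpose_apply [Fintype ρ] [DecidableEq ρ] [CommSemiring K]
    (Q : Matrix ι ρ K) (d : ρ → K) (R : Matrix κ ρ K) (i : ι) (j : κ) :
    (Q * diagonal d * Rᵀ) i j = ∑ k, Q i k * d k * R j k := by
  rw [mul_apply]
  simp only [mul_diagonal, transpose_apply]

lemma mul_diagonal_mul_transpose_eq_sum_vecMulVec [Fintype ρ] [DecidableEq ρ] [CommSemiring K]
    (Q : Matrix ι ρ K) (d : ρ → K) (R : Matrix κ ρ K) :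
    Q * diagonal d * Rᵀ = ∑ k, vecMulVec (fun i => Q i k * d k) (fun j => R j k) := by
  ext i j
  simp [mul_diagonal_mul_transpose_apply, sum_apply, vecMulVec_apply]

variable [Fintype κ] [Field K]

lemma eq_zero_of_rank_eq_zero {M : Matrix ι κ K} (h : M.rank = 0) : M = 0 := by
  classical
  rw [rank, Submodule.finrank_eq_zero, LinearMap.range_eq_bot, ← toLin'_apply'] at h
  exact toLin'.injective (by simpa using h)

lemma rank_vecMulVec_eq_one {u : ι → K} {v : κ → K} (hu : u ≠ 0) (hv : v ≠ 0) :
    (vecMulVec u v).rank = 1 := by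
  refine le_antisymm (rank_vecMulVec_le u v) (Nat.one_le_iff_ne_zero.mpr fun h => ?_)
  obtain ⟨i, hi⟩ := Function.ne_iff.mp hu
  obtain ⟨j, hj⟩ := Function.ne_iff.mp hv
  exact mul_ne_zero hi hj congr($(eq_zero_of_rank_eq_zero h) i j)

lemma exists_eq_vecMulVec_of_rank_eq_one [DecidableEq κ] {M : Matrix ι κ K}
    (h : M.rank = 1) : ∃ u v, M = vecMulVec u v := by
  obtain ⟨w, -, hw⟩ := finrank_eq_one_iff'.mp h
  choose c hc using fun j => hw ⟨M *ᵥ Pi.single j 1, Pi.single j 1, rfl⟩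
  refine ⟨w, c, ext fun i j => ?_⟩
  have := congr_arg (fun x : LinearMap.range M.mulVecLin => (x : ι → K) i) (hc j)
  simp only [SetLike.val_smul, Pi.smul_apply, smul_eq_mul, mulVec_single, MulOpposite.op_one,
    col_apply, one_smul] at this
  rw [vecMulVec_apply, ← this, mul_comm]

lemma rowSum_mul_colSum_of_rank_eq_one [Fintype ι] {M : Matrix ι κ K} (h : M.rank = 1)
    (i : ι) (j : κ) : (∑ l, M i l) * (∑ k, M k j) = (∑ k, ∑ l, M k l) * M i j := by
  classical
  obtain ⟨u, v, rfl⟩ := exists_eq_vecMulVec_of_rank_eq_one h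
  simp only [vecMulVec_apply, ← mul_sum, ← sum_mul]
  ring

lemma sum_eq_mul_diagonal_mul_transpose_of_rank_eq_one [Fintype ι] [Fintype ρ] [DecidableEq ρ]
    {f : ρ → Matrix ι κ K}
    (hf : ∀ k, (f k).rank = 1) (hf0 : ∀ k, ∑ i, ∑ j, f k i j ≠ 0) :
    ∑ k, f k = of (fun i k => ∑ j, f k i j) * diagonal (fun k => (∑ i, ∑ j, f k i j)⁻¹) *
      (of fun j k => ∑ i, f k i j)ᵀ := by
  ext i j
  rw [mul_diagonal_mul_transpose_apply, Matrix.sum_apply]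
  refine Finset.sum_congr rfl fun k _ => ?_
  simp only [of_apply]
  rw [mul_right_comm, rowSum_mul_colSum_of_rank_eq_one (hf k), mul_comm,
    inv_mul_cancel_left₀ (hf0 k)]

end Matrix

section ConePadding

variable {M : Type*} [AddCommMonoid M] [Module ℝ M] {S : Set M}

lemma exists_fin_succ_sum_eq (hS : ∀ c : ℝ, 0 < c → ∀ x ∈ S, c • x ∈ S) {q : ℕ}
    (f : Fin (q + 1) → M) (hf : ∀ i, f i ∈ S) :
    ∃ f' : Fin (q + 2) → M, (∀ i, f' i ∈ S) ∧ ∑ i, f' i = ∑ i, f i := by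
  have hhalf : (1 / 2 : ℝ) • f 0 ∈ S := hS _ (by norm_num) _ (hf 0)
  refine ⟨Fin.cons ((1 / 2 : ℝ) • f 0) (Fin.cons ((1 / 2 : ℝ) • f 0) (Fin.tail f)),
    Fin.cases hhalf (Fin.cases hhalf fun i => hf i.succ), ?_⟩
  rw [Fin.sum_cons, Fin.sum_cons, Fin.sum_univ_succ f, ← add_assoc, ← add_smul]
  norm_num
  rfl

lemma exists_fin_sum_eq_of_le (hS : ∀ c : ℝ, 0 < c → ∀ x ∈ S, c • x ∈ S) {q r : ℕ}
    (hq : 0 < q) (hqr : q ≤ r) (f : Fin q → M) (hf : ∀ i, f i ∈ S) :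
    ∃ f' : Fin r → M, (∀ i, f' i ∈ S) ∧ ∑ i, f' i = ∑ i, f i := by
  induction r, hqr using Nat.le_induction with
  | base => exact ⟨f, hf, rfl⟩
  | succ r hqr ih =>
    obtain ⟨k, rfl⟩ : ∃ k, r = k + 1 := Nat.exists_eq_add_one.mpr (hq.trans_le hqr)
    obtain ⟨f', hf', hsum⟩ := ih
    obtain ⟨f'', hf'', hsum'⟩ := exists_fin_succ_sum_eq hS f' hf'
    exact ⟨f'', hf'', hsum'.trans hsum⟩

end ConePadding

section NonnegRank

variable {n m : ℕ}

def nonnegRankOne (n m : ℕ) : Set (Mat n m) := {M | M.rank = 1 ∧ ∀ k l, 0 ≤ M k l}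

lemma smul_mem_nonnegRankOne {c : ℝ} (hc : 0 < c) {M : Mat n m}
    (hM : M ∈ nonnegRankOne n m) : c • M ∈ nonnegRankOne n m :=
  ⟨(rank_smul_of_mem_nonZeroDivisors M (mem_nonZeroDivisors_of_ne_zero hc.ne')).trans hM.1,
    fun k l => mul_nonneg hc.le (hM.2 k l)⟩

lemma sum_pos_of_mem_nonnegRankOne {M : Mat n m} (hM : M ∈ nonnegRankOne n m) :
    0 < ∑ i, ∑ j, M i j := by
  have hne : M ≠ 0 := fun h => by simpa [h] using hM.1
  obtain ⟨i, j, hij⟩ : ∃ i j, M i j ≠ 0 := by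
    by_contra! h
    exact hne (Matrix.ext h)
  exact Finset.sum_pos' (fun i _ => Finset.sum_nonneg fun j _ => hM.2 i j)
    ⟨i, Finset.mem_univ _, Finset.sum_pos' (fun j _ => hM.2 i j)
      ⟨j, Finset.mem_univ _, (hM.2 i j).lt_of_ne' hij⟩⟩

lemma nonnegRank_le_of_eq_sum {q : ℕ} {P : Mat n m} (f : Fin q → Mat n m)
    (hf : ∀ k, f k ∈ nonnegRankOne n m) (hP : P = ∑ k, f k) : nonnegRank P ≤ q :=
  Nat.sInf_le ⟨f, hf, hP⟩

lemma exists_eq_sum_rows_nonnegRankOne {P : Mat n m} (hP : ∀ i j, 0 ≤ P i j)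
    (hrows : ∀ i, P i ≠ 0) :
    ∃ f : Fin n → Mat n m, (∀ i, f i ∈ nonnegRankOne n m) ∧ P = ∑ i, f i := by
  refine ⟨fun i => vecMulVec (Pi.single i 1) (P i), fun i => ⟨?_, fun k l => ?_⟩, ?_⟩
  · exact rank_vecMulVec_eq_one (by simp) (hrows i)
  · show 0 ≤ vecMulVec _ _ k l
    rw [vecMulVec_apply]
    exact mul_nonneg (Pi.single_nonneg.mpr zero_le_one k : (0 : Fin n → ℝ) k ≤ _) (hP i l)
  · ext k l
    simp [Matrix.sum_apply, vecMulVec_apply, Pi.single_apply]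

lemma exists_eq_sum_nonnegRankOne_of_nonnegRank_le {r : ℕ} {P : Mat n m}
    (hP : ∀ i j, 0 ≤ P i j) (hrows : ∀ i, P i ≠ 0) (hP0 : P ≠ 0) (hr : nonnegRank P ≤ r) :
    ∃ f : Fin r → Mat n m, (∀ k, f k ∈ nonnegRankOne n m) ∧ P = ∑ k, f k := by
  -- `nonnegRank` is an `sInf` over `ℕ`: the row decomposition shows that it is attained.
  have hmem : nonnegRank P ∈
      {q : ℕ | ∃ f : Fin q → Mat n m, (∀ k, f k ∈ nonnegRankOne n m) ∧ P = ∑ k, f k} :=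
    Nat.sInf_mem ⟨n, exists_eq_sum_rows_nonnegRankOne hP hrows⟩
  obtain ⟨f, hf, hsum⟩ := hmem
  obtain ⟨k, -, -⟩ := Finset.exists_ne_zero_of_sum_ne_zero (hsum ▸ hP0)
  obtain ⟨f', hf', hsum'⟩ :=
    exists_fin_sum_eq_of_le (fun c hc M hM => smul_mem_nonnegRankOne hc hM) k.pos hr f hf
  exact ⟨f', hf', hsum.trans hsum'.symm⟩

end NonnegRank

section Couplings

variable {n m r : ℕ} {a : Fin n → ℝ} {b : Fin m → ℝ}

lemma sum_eq_sum_of_mem_couplings {P : Mat n m} (hP : P ∈ couplings a b) :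
    ∑ i, a i = ∑ j, b j := by
  simp only [← hP.2.1, ← hP.2.2]
  exact Finset.sum_comm

lemma of_rowSums_mem_couplings {P : Mat n m} (f : Fin r → Mat n m) (hf : ∀ k i j, 0 ≤ f k i j)
    (hP : P = ∑ k, f k) (hrow : ∀ i, ∑ j, P i j = a i) :
    of (fun i k => ∑ j, f k i j) ∈ couplings a (fun k => ∑ i, ∑ j, f k i j) := by
  refine ⟨fun i k => (Finset.sum_nonneg fun j _ => hf k i j : 0 ≤ ∑ j, f k i j), fun i => ?_,
    fun k => rfl⟩
  simp only [of_apply, ← hrow i, hP, Matrix.sum_apply]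
  exact Finset.sum_comm

lemma exists_factorization_of_eq_sum_nonnegRankOne {P : Mat n m} (f : Fin r → Mat n m)
    (hf : ∀ k, f k ∈ nonnegRankOne n m) (hP : P = ∑ k, f k) (hPab : P ∈ couplings a b)
    (ha : ∑ i, a i = 1) :
    ∃ g ∈ posSimplex r, ∃ Q ∈ couplings a g, ∃ R ∈ couplings b g,
      P = Q * diagonal (fun k => (g k)⁻¹) * Rᵀ := by
  have hg : ∀ k, 0 < ∑ i, ∑ j, f k i j := fun k => sum_pos_of_mem_nonnegRankOne (hf k)
  have hQ := of_rowSums_mem_couplings f (fun k => (hf k).2) hP hPab.2.1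
  have hR := of_rowSums_mem_couplings (P := Pᵀ) (fun k => (f k)ᵀ) (fun k i j => (hf k).2 j i)
    (by rw [hP, transpose_sum]) hPab.2.2
  simp only [transpose_apply, Finset.sum_comm (γ := Fin m)] at hR
  refine ⟨_, ⟨hg, ?_⟩, _, hQ, _, hR, ?_⟩
  · rw [← sum_eq_sum_of_mem_couplings hQ, ha]
  · rw [hP]
    exact sum_eq_mul_diagonal_mul_transpose_of_rank_eq_one (fun k => (hf k).1) fun k => (hg k).ne'

variable {g : Fin r → ℝ} {Q : Mat n r} {R : Mat m r}

lemma mul_diagonal_mul_transpose_mem_couplings (hg : ∀ k, 0 < g k) (hQ : Q ∈ couplings a g)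
    (hR : R ∈ couplings b g) : Q * diagonal (fun k => (g k)⁻¹) * Rᵀ ∈ couplings a b := by
  refine ⟨fun i j => ?_, fun i => ?_, fun j => ?_⟩ <;>
    simp only [mul_diagonal_mul_transpose_apply]
  · exact Finset.sum_nonneg fun k _ =>
      mul_nonneg (mul_nonneg (hQ.1 i k) (inv_nonneg.mpr (hg k).le)) (hR.1 j k)
  · rw [Finset.sum_comm, ← hQ.2.1 i]
    refine Finset.sum_congr rfl fun k _ => ?_
    rw [← Finset.mul_sum, hR.2.2 k, inv_mul_cancel_right₀ (hg k).ne']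
  · rw [Finset.sum_comm, ← hR.2.1 j]
    refine Finset.sum_congr rfl fun k _ => ?_
    rw [← Finset.sum_mul, ← Finset.sum_mul, hQ.2.2 k, mul_inv_cancel₀ (hg k).ne', one_mul]

lemma nonnegRank_mul_diagonal_mul_transpose_le (hg : ∀ k, 0 < g k) (hQ : Q ∈ couplings a g)
    (hR : R ∈ couplings b g) : nonnegRank (Q * diagonal (fun k => (g k)⁻¹) * Rᵀ) ≤ r := by
  have hcol {p : ℕ} {c : Fin p → ℝ} {M : Mat p r} (hM : M ∈ couplings c g) (k : Fin r) :
      (fun i => M i k) ≠ 0 := fun h =>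
    (hg k).ne' (by rw [← hM.2.2 k]; exact Finset.sum_eq_zero fun i _ => congr_fun h i)
  refine nonnegRank_le_of_eq_sum _
    (fun k => ⟨rank_vecMulVec_eq_one ?_ (hcol hR k), fun i j => ?_⟩)
    (mul_diagonal_mul_transpose_eq_sum_vecMulVec _ _ _)
  · exact fun h => hcol hQ k (funext fun i => by simpa [(hg k).ne'] using congr_fun h i)
  · exact mul_nonneg (mul_nonneg (hQ.1 i k) (inv_nonneg.mpr (hg k).le)) (hR.1 j k)

end Couplings

theorem low_rank_coupling_factorization_general {n m : ℕ} (r : ℕ)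
    (a : Fin n → ℝ) (ha : a ∈ posSimplex n)
    (b : Fin m → ℝ)
    (P : Mat n m) :
    P ∈ couplingsRank a b r ↔
      ∃ g : Fin r → ℝ, g ∈ posSimplex r ∧
        ∃ Q ∈ couplings a g, ∃ R ∈ couplings b g,
          P = Q * Matrix.diagonal (fun i => (g i)⁻¹) * Rᵀ := by
  constructor
  · rintro ⟨hP, hrank⟩
    have hrows : ∀ i, P i ≠ 0 := fun i hi =>
      (ha.1 i).ne' (by rw [← hP.2.1 i, hi]; simp)
    have hP0 : P ≠ 0 := fun h => by simpa [← hP.2.1, h] using ha.2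
    obtain ⟨f, hf, hsum⟩ := exists_eq_sum_nonnegRankOne_of_nonnegRank_le hP.1 hrows hP0 hrank
    exact exists_factorization_of_eq_sum_nonnegRankOne f hf hsum hP ha.2
  · rintro ⟨g, hg, Q, hQ, R, hR, rfl⟩
    exact ⟨mul_diagonal_mul_transpose_mem_couplings hg.1 hQ hR,
      nonnegRank_mul_diagonal_mul_transpose_le hg.1 hQ hR⟩

/-- ⋃_{g ∈ Δ_r^*} Π_{a,g,b} = Π_{a,b}(r): a nonnegative matrix `P` is a
coupling of `(a, b)` with nonnegative rank at most `r` iff it factors as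
`P = Q Diag(1/g) Rᵀ` with `g ∈ Δ_r^*`, `Q ∈ Π_{a,g}`, `R ∈ Π_{b,g}`. -/
theorem low_rank_coupling_factorization {n m : ℕ} (r : ℕ) (hr : 1 ≤ r)
    (a : Fin n → ℝ) (ha : a ∈ posSimplex n)
    (b : Fin m → ℝ) (hb : b ∈ posSimplex m)
    (P : Mat n m) :
    P ∈ couplingsRank a b r ↔
      ∃ g : Fin r → ℝ, g ∈ posSimplex r ∧
        ∃ Q ∈ couplings a g, ∃ R ∈ couplings b g,
          P = Q * Matrix.diagonal (fun i => (g i)⁻¹) * Rᵀ :=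
  low_rank_coupling_factorization_general r a ha b P
end

section
/- Let a ∈ Δ_n^*, b ∈ Δ_m^*, C ∈ ℝ^{n×m}, ε > 0 and r ≥ 2. If LOT_{r,ε} < LOT_{r−1,ε}, then the infimum of F_ε over C(a,b,r) is attained at some (Q,R,g) ∈ C(a,b,r). -/
open Matrix Finset Real
open scoped RealInnerProductSpace

noncomputable section AuxProof

open Filter Topology

namespace LOTAux

variable {n m r : ℕ}

/-- The compact relaxed feasible set. -/
def Kset (a : Fin n → ℝ) (b : Fin m → ℝ) (r : ℕ) : Set (LRTriple n m r) :=
  C1barSet a b r ∩ C2set r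

lemma contQ (i : Fin n) (j : Fin r) : Continuous fun x : LRTriple n m r => x.1 i j :=
  continuous_fst.matrix_elem i j

lemma contR (i : Fin m) (j : Fin r) : Continuous fun x : LRTriple n m r => x.2.1 i j :=
  (continuous_fst.comp continuous_snd).matrix_elem i j

lemma contg (j : Fin r) : Continuous fun x : LRTriple n m r => x.2.2 j :=
  (continuous_apply j).comp (continuous_snd.comp continuous_snd)

lemma isClosed_Kset (a : Fin n → ℝ) (b : Fin m → ℝ) : IsClosed (Kset a b r) := by
  have hQ : ∀ i j, IsClosed {x : LRTriple n m r | 0 ≤ x.1 i j} := fun i j =>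
    isClosed_le continuous_const (contQ i j)
  have hR : ∀ i j, IsClosed {x : LRTriple n m r | 0 ≤ x.2.1 i j} := fun i j =>
    isClosed_le continuous_const (contR i j)
  have hg : ∀ j, IsClosed {x : LRTriple n m r | 0 ≤ x.2.2 j} := fun j =>
    isClosed_le continuous_const (contg j)
  have h1 : IsClosed (C1barSet a b r) := by
    have : C1barSet a b r =
        (⋂ i, ⋂ j, {x : LRTriple n m r | 0 ≤ x.1 i j}) ∩
        ((⋂ i, ⋂ j, {x : LRTriple n m r | 0 ≤ x.2.1 i j}) ∩
        ((⋂ j, {x : LRTriple n m r | 0 ≤ x.2.2 j}) ∩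
        ((⋂ i, {x : LRTriple n m r | ∑ j, x.1 i j = a i}) ∩
         (⋂ i, {x : LRTriple n m r | ∑ j, x.2.1 i j = b i})))) := by
      ext x
      simp only [C1barSet, Set.mem_setOf_eq, Set.mem_inter_iff, Set.mem_iInter]
      all_goals tauto
    rw [this]
    refine ((isClosed_iInter fun i => isClosed_iInter fun j => hQ i j).inter
      (((isClosed_iInter fun i => isClosed_iInter fun j => hR i j)).inter
      ((isClosed_iInter fun j => hg j).inter
      ((isClosed_iInter fun i => ?_).inter (isClosed_iInter fun i => ?_)))))
    · exact isClosed_eq (continuous_finset_sum _ fun j _ => contQ i j) continuous_const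
    · exact isClosed_eq (continuous_finset_sum _ fun j _ => contR i j) continuous_const
  have h2 : IsClosed (C2set (n := n) (m := m) r) := by
    have : C2set (n := n) (m := m) r =
        (⋂ i, ⋂ j, {x : LRTriple n m r | 0 ≤ x.1 i j}) ∩
        ((⋂ i, ⋂ j, {x : LRTriple n m r | 0 ≤ x.2.1 i j}) ∩
        ((⋂ j, {x : LRTriple n m r | 0 ≤ x.2.2 j}) ∩
        ((⋂ j, {x : LRTriple n m r | ∑ i, x.1 i j = x.2.2 j}) ∩
         (⋂ j, {x : LRTriple n m r | ∑ i, x.2.1 i j = x.2.2 j})))) := by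
      ext x
      simp only [C2set, Set.mem_setOf_eq, Set.mem_inter_iff, Set.mem_iInter]
      all_goals tauto
    rw [this]
    refine ((isClosed_iInter fun i => isClosed_iInter fun j => hQ i j).inter
      (((isClosed_iInter fun i => isClosed_iInter fun j => hR i j)).inter
      ((isClosed_iInter fun j => hg j).inter
      ((isClosed_iInter fun j => ?_).inter (isClosed_iInter fun j => ?_)))))
    · exact isClosed_eq (continuous_finset_sum _ fun i _ => contQ i j) (contg j)
    · exact isClosed_eq (continuous_finset_sum _ fun i _ => contR i j) (contg j)
  exact h1.inter h2

lemma entry_le_g {x : LRTriple n m r} (hx : x ∈ Kset a b r) (i : Fin n) (k : Fin r) :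
    x.1 i k ≤ x.2.2 k := by
  rw [← hx.2.2.2.2.1 k]
  exact Finset.single_le_sum (fun i _ => hx.1.1 i k) (Finset.mem_univ i)

lemma entryR_le_g {x : LRTriple n m r} (hx : x ∈ Kset a b r) (j : Fin m) (k : Fin r) :
    x.2.1 j k ≤ x.2.2 k := by
  rw [← hx.2.2.2.2.2 k]
  exact Finset.single_le_sum (fun i _ => hx.1.2.1 i k) (Finset.mem_univ j)

lemma sum_g_eq_one {a : Fin n → ℝ} {b : Fin m → ℝ} (hsa : ∑ i, a i = 1)
    {x : LRTriple n m r} (hx : x ∈ Kset a b r) : ∑ k, x.2.2 k = 1 := by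
  have : ∑ k, x.2.2 k = ∑ k, ∑ i, x.1 i k := by
    refine Finset.sum_congr rfl fun k _ => (hx.2.2.2.2.1 k).symm
  rw [this, Finset.sum_comm]
  have : ∀ i, ∑ k, x.1 i k = a i := hx.1.2.2.2.1
  simp only [this]
  exact hsa

lemma isCompact_Kset {a : Fin n → ℝ} {b : Fin m → ℝ}
    (hsa : ∑ i, a i = 1) (hsb : ∑ i, b i = 1) (hapos : ∀ i, 0 ≤ a i)
    (hbpos : ∀ i, 0 ≤ b i) : IsCompact (Kset a b r) := by
  classical
  set S : Set (LRTriple n m r) :=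
    (Set.pi Set.univ fun _ : Fin n => Set.pi Set.univ fun _ : Fin r => Set.Icc (0:ℝ) 1) ×ˢ
   ((Set.pi Set.univ fun _ : Fin m => Set.pi Set.univ fun _ : Fin r => Set.Icc (0:ℝ) 1) ×ˢ
    (Set.pi Set.univ fun _ : Fin r => Set.Icc (0:ℝ) 1)) with hS
  have hScmp : IsCompact S := by
    refine IsCompact.prod ?_ (IsCompact.prod ?_ ?_)
    · exact isCompact_univ_pi fun _ => isCompact_univ_pi fun _ => isCompact_Icc
    · exact isCompact_univ_pi fun _ => isCompact_univ_pi fun _ => isCompact_Icc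
    · exact isCompact_univ_pi fun _ => isCompact_Icc
  refine hScmp.of_isClosed_subset (isClosed_Kset a b) ?_
  intro x hx
  have hgle : ∀ k, x.2.2 k ≤ 1 := by
    intro k
    rw [← sum_g_eq_one hsa hx]
    exact Finset.single_le_sum (fun i _ => hx.1.2.2.1 i) (Finset.mem_univ k)
  have hQle : ∀ i k, x.1 i k ∈ Set.Icc (0:ℝ) 1 := fun i k =>
    ⟨hx.1.1 i k, (entry_le_g hx i k).trans (hgle k)⟩
  have hRle : ∀ j k, x.2.1 j k ∈ Set.Icc (0:ℝ) 1 := fun j k =>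
    ⟨hx.1.2.1 j k, (entryR_le_g hx j k).trans (hgle k)⟩
  refine ⟨fun i _ => fun k _ => hQle i k, fun j _ => fun k _ => hRle j k,
    fun k _ => ⟨hx.1.2.2.1 k, hgle k⟩⟩

lemma aux_cont {α : Type*} [TopologicalSpace α] {K : Set α} {q ρ γ : α → ℝ}
    (hq : ContinuousOn q K) (hρ : ContinuousOn ρ K) (hγ : ContinuousOn γ K)
    (h1 : ∀ x ∈ K, 0 ≤ q x) (h2 : ∀ x ∈ K, q x ≤ γ x)
    (h3 : ∀ x ∈ K, 0 ≤ ρ x) (h4 : ∀ x ∈ K, ρ x ≤ γ x) :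
    ContinuousOn (fun x => q x * (γ x)⁻¹ * ρ x) K := by
  intro x hx
  have hγ0 : 0 ≤ γ x := (h1 x hx).trans (h2 x hx)
  rcases eq_or_lt_of_le hγ0 with h0 | h0
  · have hval : q x * (γ x)⁻¹ * ρ x = 0 := by
      have hq0 : q x = 0 := le_antisymm ((h2 x hx).trans h0.symm.le) (h1 x hx)
      rw [hq0]; ring
    rw [ContinuousWithinAt, hval]
    have hgt : Tendsto γ (nhdsWithin x K) (nhds 0) := by
      have := hγ x hx
      rwa [ContinuousWithinAt, ← h0] at this
    refine squeeze_zero' ?_ ?_ hgt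
    · filter_upwards [self_mem_nhdsWithin] with y hy
      exact mul_nonneg (mul_nonneg (h1 y hy)
        (inv_nonneg.2 ((h1 y hy).trans (h2 y hy)))) (h3 y hy)
    · filter_upwards [self_mem_nhdsWithin] with y hy
      have hγy : 0 ≤ γ y := (h1 y hy).trans (h2 y hy)
      rcases eq_or_lt_of_le hγy with h0' | h0'
      · have hqy : q y = 0 := le_antisymm ((h2 y hy).trans h0'.symm.le) (h1 y hy)
        rw [hqy]; simpa using hγy
      · have step1 : q y * (γ y)⁻¹ ≤ γ y * (γ y)⁻¹ :=
          mul_le_mul_of_nonneg_right (h2 y hy) (inv_nonneg.2 hγy)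
        have step2 : q y * (γ y)⁻¹ * ρ y ≤ 1 * γ y := by
          rw [mul_inv_cancel₀ (ne_of_gt h0')] at step1
          exact mul_le_mul step1 (h4 y hy) (h3 y hy) zero_le_one
        simpa using step2
  · exact ((hq x hx).mul ((hγ x hx).inv₀ (ne_of_gt h0))).mul (hρ x hx)

lemma prod_apply (x : LRTriple n m r) (i : Fin n) (j : Fin m) :
    (x.1 * Matrix.diagonal (fun k => (x.2.2 k)⁻¹) * x.2.1ᵀ) i j =
      ∑ k, x.1 i k * (x.2.2 k)⁻¹ * x.2.1 j k := by
  rw [Matrix.mul_apply]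
  refine Finset.sum_congr rfl fun k _ => ?_
  rw [Matrix.mul_diagonal, Matrix.transpose_apply]

lemma contMatH : Continuous fun x : LRTriple n m r => matH x.1 := by
  unfold matH
  refine Continuous.neg (continuous_finset_sum _ fun i _ =>
    continuous_finset_sum _ fun j _ => ?_)
  have h := contQ (m := m) i j
  have : (fun x : LRTriple n m r => x.1 i j * (Real.log (x.1 i j) - 1)) =
      fun x => x.1 i j * Real.log (x.1 i j) - x.1 i j := by
    funext x; ring
  rw [this]
  exact (Real.continuous_mul_log.comp h).sub h

lemma contMatHR : Continuous fun x : LRTriple n m r => matH x.2.1 := by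
  unfold matH
  refine Continuous.neg (continuous_finset_sum _ fun i _ =>
    continuous_finset_sum _ fun j _ => ?_)
  have h := contR (n := n) i j
  have : (fun x : LRTriple n m r => x.2.1 i j * (Real.log (x.2.1 i j) - 1)) =
      fun x => x.2.1 i j * Real.log (x.2.1 i j) - x.2.1 i j := by
    funext x; ring
  rw [this]
  exact (Real.continuous_mul_log.comp h).sub h

lemma contVecH : Continuous fun x : LRTriple n m r => vecH x.2.2 := by
  unfold vecH
  refine Continuous.neg (continuous_finset_sum _ fun i _ => ?_)
  have h := contg (n := n) (m := m) i
  have : (fun x : LRTriple n m r => x.2.2 i * (Real.log (x.2.2 i) - 1)) =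
      fun x => x.2.2 i * Real.log (x.2.2 i) - x.2.2 i := by
    funext x; ring
  rw [this]
  exact (Real.continuous_mul_log.comp h).sub h

lemma contOn_Fobj (a : Fin n → ℝ) (b : Fin m → ℝ) (C : Mat n m) (ε : ℝ) :
    ContinuousOn (Fobj C ε) (Kset a b r) := by
  have htrans : ContinuousOn
      (fun x : LRTriple n m r =>
        frobInner C (x.1 * Matrix.diagonal (fun k => (x.2.2 k)⁻¹) * x.2.1ᵀ))
      (Kset a b r) := by
    have heq : (fun x : LRTriple n m r =>
        frobInner C (x.1 * Matrix.diagonal (fun k => (x.2.2 k)⁻¹) * x.2.1ᵀ)) =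
        fun x => ∑ i, ∑ j, ∑ k, C i j * (x.1 i k * (x.2.2 k)⁻¹ * x.2.1 j k) := by
      funext x
      unfold frobInner
      refine Finset.sum_congr rfl fun i _ => Finset.sum_congr rfl fun j _ => ?_
      rw [prod_apply, Finset.mul_sum]
    rw [heq]
    refine continuousOn_finset_sum _ fun i _ => continuousOn_finset_sum _ fun j _ =>
      continuousOn_finset_sum _ fun k _ => ContinuousOn.const_smul ?_ (C i j)
    exact aux_cont (contQ i k).continuousOn (contR j k).continuousOn
      (contg k).continuousOn (fun x hx => hx.1.1 i k) (fun x hx => entry_le_g hx i k)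
      (fun x hx => hx.1.2.1 j k) (fun x hx => entryR_le_g hx j k)
  unfold Fobj
  exact htrans.sub (Continuous.continuousOn (by
    exact (continuous_const.mul ((contMatH.add contMatHR).add contVecH))))

lemma phi_ge_neg_one {p : ℝ} (hp : 0 ≤ p) : -1 ≤ p * (Real.log p - 1) := by
  rcases eq_or_lt_of_le hp with h | h
  · simp [← h]
  · have hlog : Real.log p⁻¹ ≤ p⁻¹ - 1 := Real.log_le_sub_one_of_pos (inv_pos.2 h)
    rw [Real.log_inv] at hlog
    have : 1 - p⁻¹ ≤ Real.log p := by linarith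
    have hmul : p * (1 - p⁻¹) ≤ p * Real.log p := mul_le_mul_of_nonneg_left this hp
    have hpinv : p * p⁻¹ = 1 := mul_inv_cancel₀ (ne_of_gt h)
    nlinarith

lemma matH_le {k l : ℕ} {P : Mat k l} (h : ∀ i j, 0 ≤ P i j) :
    matH P ≤ (k : ℝ) * l := by
  unfold matH
  have : -((k : ℝ) * l) ≤ ∑ i, ∑ j, P i j * (Real.log (P i j) - 1) := by
    calc -((k : ℝ) * l) = ∑ _i : Fin k, ∑ _j : Fin l, (-1 : ℝ) := by
          simp only [Finset.sum_const, Finset.card_univ, Fintype.card_fin,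
            nsmul_eq_mul, mul_neg, mul_one]
          all_goals ring
      _ ≤ _ := by
          refine Finset.sum_le_sum fun i _ => Finset.sum_le_sum fun j _ =>
            phi_ge_neg_one (h i j)
  linarith

lemma vecH_le {k : ℕ} {g : Fin k → ℝ} (h : ∀ i, 0 ≤ g i) : vecH g ≤ (k : ℝ) := by
  unfold vecH
  have : -(k : ℝ) ≤ ∑ i, g i * (Real.log (g i) - 1) := by
    calc -(k : ℝ) = ∑ _i : Fin k, (-1 : ℝ) := by simp
      _ ≤ _ := Finset.sum_le_sum fun i _ => phi_ge_neg_one (h i)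
  linarith

/-- Uniform lower bound for `Fobj` on the relaxed feasible set. -/
lemma Fobj_lower_bound {a : Fin n → ℝ} {b : Fin m → ℝ}
    (hsa : ∑ i, a i = 1) (C : Mat n m) {ε : ℝ} (hε : 0 ≤ ε)
    {x : LRTriple n m r} (hx : x ∈ Kset a b r) :
    -(∑ i, ∑ j, |C i j|) - ε * ((n : ℝ) * r + (m : ℝ) * r + r) ≤ Fobj C ε x := by
  have hPmem : ∀ i j, 0 ≤ (x.1 * Matrix.diagonal (fun k => (x.2.2 k)⁻¹) * x.2.1ᵀ) i j ∧
      (x.1 * Matrix.diagonal (fun k => (x.2.2 k)⁻¹) * x.2.1ᵀ) i j ≤ 1 := by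
    intro i j
    rw [prod_apply]
    constructor
    · refine Finset.sum_nonneg fun k _ => ?_
      exact mul_nonneg (mul_nonneg (hx.1.1 i k) (inv_nonneg.2 (hx.1.2.2.1 k)))
        (hx.1.2.1 j k)
    · calc ∑ k, x.1 i k * (x.2.2 k)⁻¹ * x.2.1 j k ≤ ∑ k, x.2.2 k := by
            refine Finset.sum_le_sum fun k _ => ?_
            rcases eq_or_lt_of_le (hx.1.2.2.1 k) with h0 | h0
            · have : x.1 i k = 0 :=
                le_antisymm ((entry_le_g hx i k).trans h0.symm.le) (hx.1.1 i k)
              rw [this]; simp [← h0]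
            · have s1 : x.1 i k * (x.2.2 k)⁻¹ ≤ x.2.2 k * (x.2.2 k)⁻¹ :=
                mul_le_mul_of_nonneg_right (entry_le_g hx i k) (inv_nonneg.2 h0.le)
              rw [mul_inv_cancel₀ (ne_of_gt h0)] at s1
              calc x.1 i k * (x.2.2 k)⁻¹ * x.2.1 j k ≤ 1 * x.2.2 k :=
                    mul_le_mul s1 (entryR_le_g hx j k) (hx.1.2.1 j k) zero_le_one
                _ = x.2.2 k := one_mul _
        _ = 1 := sum_g_eq_one hsa hx
  have htr : -(∑ i, ∑ j, |C i j|) ≤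
      frobInner C (x.1 * Matrix.diagonal (fun k => (x.2.2 k)⁻¹) * x.2.1ᵀ) := by
    unfold frobInner
    rw [← Finset.sum_neg_distrib]
    refine Finset.sum_le_sum fun i _ => ?_
    rw [← Finset.sum_neg_distrib]
    refine Finset.sum_le_sum fun j _ => ?_
    have h1 := (hPmem i j).1
    have h2 := (hPmem i j).2
    have : |C i j * (x.1 * Matrix.diagonal (fun k => (x.2.2 k)⁻¹) * x.2.1ᵀ) i j| ≤
        |C i j| := by
      rw [abs_mul]
      calc |C i j| * |(x.1 * Matrix.diagonal (fun k => (x.2.2 k)⁻¹) * x.2.1ᵀ) i j|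
          ≤ |C i j| * 1 := by
            refine mul_le_mul_of_nonneg_left ?_ (abs_nonneg _)
            rw [abs_of_nonneg h1]; exact h2
        _ = |C i j| := mul_one _
    linarith [neg_abs_le (C i j * (x.1 * Matrix.diagonal (fun k => (x.2.2 k)⁻¹) * x.2.1ᵀ) i j)]
  have hH : matH x.1 + matH x.2.1 + vecH x.2.2 ≤ (n : ℝ) * r + (m : ℝ) * r + r := by
    have h1 := matH_le (P := x.1) (fun i j => hx.1.1 i j)
    have h2 := matH_le (P := x.2.1) (fun i j => hx.1.2.1 i j)
    have h3 := vecH_le (g := x.2.2) (fun i => hx.1.2.2.1 i)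
    linarith
  have : ε * (matH x.1 + matH x.2.1 + vecH x.2.2) ≤
      ε * ((n : ℝ) * r + (m : ℝ) * r + r) := mul_le_mul_of_nonneg_left hH hε
  unfold Fobj
  linarith

lemma Cset_nonempty {a : Fin n → ℝ} {b : Fin m → ℝ}
    (hsa : ∑ i, a i = 1) (hsb : ∑ i, b i = 1)
    (hapos : ∀ i, 0 ≤ a i) (hbpos : ∀ i, 0 ≤ b i) (hr : 0 < r) :
    (Cset a b r).Nonempty := by
  have hr' : (0:ℝ) < r := by exact_mod_cast hr
  refine ⟨(Matrix.of fun i _ => a i / r, Matrix.of fun j _ => b j / r,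
    fun _ => 1 / r), ?_⟩
  have hrow : ∀ (c : ℝ), ∑ _k : Fin r, c / r = c := by
    intro c
    rw [Finset.sum_const, Finset.card_univ, Fintype.card_fin, nsmul_eq_mul]
    field_simp
  refine ⟨⟨fun i k => div_nonneg (hapos i) hr'.le,
    fun j k => div_nonneg (hbpos j) hr'.le,
    fun _ => by positivity, fun i => hrow (a i), fun j => hrow (b j)⟩,
    fun i k => div_nonneg (hapos i) hr'.le,
    fun j k => div_nonneg (hbpos j) hr'.le,
    fun _ => by positivity, ?_, ?_⟩ <;> intro k <;>
    simp only [Matrix.of_apply] <;> rw [← Finset.sum_div]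
  · rw [hsa]
  · rw [hsb]

/-- z·φ(q/z) ≤ φ(q) where φ(t) = t(log t − 1), for q ≥ 0 and z ≥ 1. -/
lemma phi_split {q z : ℝ} (hq : 0 ≤ q) (hz : 1 ≤ z) :
    z * (q / z * (Real.log (q / z) - 1)) ≤ q * (Real.log q - 1) := by
  have hz0 : (0:ℝ) < z := lt_of_lt_of_le zero_lt_one hz
  rcases eq_or_lt_of_le hq with h | h
  · rw [← h]; simp
  · have hlog : Real.log (q / z) = Real.log q - Real.log z :=
      Real.log_div (ne_of_gt h) (ne_of_gt hz0)
    rw [hlog]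
    have hlz : 0 ≤ Real.log z := Real.log_nonneg hz
    have : z * (q / z * (Real.log q - Real.log z - 1)) =
        q * (Real.log q - 1) - q * Real.log z := by
      field_simp; ring
    rw [this]
    nlinarith [mul_nonneg h.le hlz]

/-- The reduction step: if `x` is in the relaxed feasible set with `g k₀ = 0` and
`g k₁ > 0`, there is `y ∈ 𝒞(a,b,s)` with `F_ε y ≤ F_ε x`. -/
lemma exists_reduced {s : ℕ} {a : Fin n → ℝ} {b : Fin m → ℝ} (C : Mat n m) {ε : ℝ}
    (hε : 0 ≤ ε) (x : LRTriple n m (s+1)) (hx : x ∈ Kset a b (s+1))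
    (k₀ : Fin (s+1)) (hk₀ : x.2.2 k₀ = 0) (k₁ : Fin (s+1)) (hk₁ : 0 < x.2.2 k₁) :
    ∃ y ∈ Cset a b s, Fobj C ε y ≤ Fobj C ε x := by
  classical
  obtain ⟨⟨hQnn, hRnn, hgnn, hrowQ, hrowR⟩, ⟨_, _, _, hcolQ, hcolR⟩⟩ := hx
  set Q := x.1 with hQdef
  set R := x.2.1 with hRdef
  set g := x.2.2 with hgdef
  have hk01 : k₁ ≠ k₀ := by
    intro h; rw [h, hk₀] at hk₁; exact lt_irrefl 0 hk₁
  set c : Fin s → Fin (s+1) := k₀.succAbove with hcdef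
  have hc_inj : Function.Injective c := Fin.succAbove_right_injective
  obtain ⟨j₁, hj₁⟩ : ∃ j, c j = k₁ := Fin.exists_succAbove_eq hk01
  set T : Finset (Fin s) := Finset.univ.filter (fun j => g (c j) = 0 ∨ c j = k₁)
    with hTdef
  have hj₁T : j₁ ∈ T := by simp [hTdef, hj₁]
  set z : ℕ := T.card with hzdef
  have hzpos : 0 < z := Finset.card_pos.2 ⟨j₁, hj₁T⟩
  have hz1 : (1:ℝ) ≤ z := by exact_mod_cast hzpos
  have hz0 : (z:ℝ) ≠ 0 := by positivity
  -- entries vanish on zero columns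
  have hQ0 : ∀ i k, g k = 0 → Q i k = 0 := by
    intro i k hk
    have hsum : ∑ i', Q i' k = 0 := by rw [hcolQ k]; exact hk
    exact (Finset.sum_eq_zero_iff_of_nonneg (fun i' _ => hQnn i' k)).1 hsum i
      (Finset.mem_univ i)
  have hR0 : ∀ j k, g k = 0 → R j k = 0 := by
    intro j k hk
    have hsum : ∑ j', R j' k = 0 := by rw [hcolR k]; exact hk
    exact (Finset.sum_eq_zero_iff_of_nonneg (fun j' _ => hRnn j' k)).1 hsum j
      (Finset.mem_univ j)
  -- the key summation identity
  have key : ∀ (f : Fin (s+1) → ℝ) (e : ℝ), (∀ k, g k = 0 → f k = 0) →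
      ∑ j : Fin s, (if j ∈ T then e else f (c j)) = z * e + ∑ k, f k - f k₁ := by
    intro f e hf
    have hsplit : ∀ j : Fin s, (if j ∈ T then e else f (c j)) =
        (if j ∈ T then e else 0) + (if j ∈ T then 0 else f (c j)) := by
      intro j; by_cases hj : j ∈ T <;> simp [hj]
    have hsplit2 : ∀ j : Fin s, f (c j) =
        (if j ∈ T then f (c j) else 0) + (if j ∈ T then 0 else f (c j)) := by
      intro j; by_cases hj : j ∈ T <;> simp [hj]
    have h1 : ∑ j : Fin s, (if j ∈ T then e else 0) = z * e := by
      rw [Finset.sum_ite_mem, Finset.univ_inter, Finset.sum_const, nsmul_eq_mul]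
    have h2 : ∑ j : Fin s, (if j ∈ T then f (c j) else 0) = f k₁ := by
      rw [Finset.sum_ite_mem, Finset.univ_inter]
      rw [Finset.sum_eq_single_of_mem j₁ hj₁T]
      · rw [hj₁]
      · intro j hj hne
        have hcj : c j ≠ k₁ := fun h => hne (hc_inj (h.trans hj₁.symm))
        have : g (c j) = 0 := by
          rcases (Finset.mem_filter.1 hj).2 with h | h
          · exact h
          · exact absurd h hcj
        exact hf _ this
    have h3 : ∑ k, f k = ∑ j : Fin s, f (c j) := by
      rw [Fin.sum_univ_succAbove f k₀, hf k₀ hk₀, zero_add]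
    calc ∑ j : Fin s, (if j ∈ T then e else f (c j))
        = ∑ j : Fin s, ((if j ∈ T then e else 0) + (if j ∈ T then 0 else f (c j))) :=
          Finset.sum_congr rfl fun j _ => hsplit j
      _ = z * e + ∑ j : Fin s, (if j ∈ T then 0 else f (c j)) := by
          rw [Finset.sum_add_distrib, h1]
      _ = z * e + (∑ j : Fin s, f (c j) - f k₁) := by
          congr 1
          have := Finset.sum_congr rfl fun j (_ : j ∈ Finset.univ) => hsplit2 j
          rw [this, Finset.sum_add_distrib, h2]
          ring
      _ = z * e + ∑ k, f k - f k₁ := by rw [← h3]; ring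
  -- the reduced triple
  set y : LRTriple n m s :=
    (Matrix.of fun i j => if j ∈ T then Q i k₁ / z else Q i (c j),
     Matrix.of fun i j => if j ∈ T then R i k₁ / z else R i (c j),
     fun j => if j ∈ T then g k₁ / z else g (c j)) with hydef
  have hyQnn : ∀ i j, 0 ≤ y.1 i j := by
    intro i j
    simp only [hydef, Matrix.of_apply]
    split
    · exact div_nonneg (hQnn i k₁) (by positivity)
    · exact hQnn i _
  have hyRnn : ∀ i j, 0 ≤ y.2.1 i j := by
    intro i j
    simp only [hydef, Matrix.of_apply]
    split
    · exact div_nonneg (hRnn i k₁) (by positivity)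
    · exact hRnn i _
  have hygpos : ∀ j, 0 < y.2.2 j := by
    intro j
    simp only [hydef]
    split
    · exact div_pos hk₁ (by exact_mod_cast hzpos)
    · next hj =>
      have : ¬(g (c j) = 0 ∨ c j = k₁) := by
        intro h; exact hj (by simp [hTdef, h])
      push_neg at this
      exact lt_of_le_of_ne (hgnn _) (Ne.symm this.1)
  have hyrowQ : ∀ i, ∑ j, y.1 i j = a i := by
    intro i
    have := key (fun k => Q i k) (Q i k₁ / z) (fun k hk => hQ0 i k hk)
    simp only [hydef, Matrix.of_apply]
    rw [this, hrowQ i, mul_div_cancel₀ _ hz0]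
    ring
  have hyrowR : ∀ j, ∑ k, y.2.1 j k = b j := by
    intro j
    have := key (fun k => R j k) (R j k₁ / z) (fun k hk => hR0 j k hk)
    simp only [hydef, Matrix.of_apply]
    rw [this, hrowR j, mul_div_cancel₀ _ hz0]
    ring
  have hycolQ : ∀ j, ∑ i, y.1 i j = y.2.2 j := by
    intro j
    by_cases hj : j ∈ T
    · simp only [hydef, Matrix.of_apply, hj, if_true]
      rw [← Finset.sum_div, hcolQ]
    · simp only [hydef, Matrix.of_apply, hj, if_false]
      exact hcolQ _
  have hycolR : ∀ j, ∑ i, y.2.1 i j = y.2.2 j := by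
    intro j
    by_cases hj : j ∈ T
    · simp only [hydef, Matrix.of_apply, hj, if_true]
      rw [← Finset.sum_div, hcolR]
    · simp only [hydef, Matrix.of_apply, hj, if_false]
      exact hcolR _
  refine ⟨y, ⟨⟨hyQnn, hyRnn, hygpos, hyrowQ, hyrowR⟩,
    hyQnn, hyRnn, fun j => (hygpos j).le, hycolQ, hycolR⟩, ?_⟩
  -- transport terms are equal
  have htrans : frobInner C (y.1 * Matrix.diagonal (fun k => (y.2.2 k)⁻¹) * y.2.1ᵀ) =
      frobInner C (Q * Matrix.diagonal (fun k => (g k)⁻¹) * Rᵀ) := by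
    unfold frobInner
    refine Finset.sum_congr rfl fun i _ => Finset.sum_congr rfl fun j _ => ?_
    congr 1
    rw [prod_apply, prod_apply]
    have hterm : ∀ k : Fin s, y.1 i k * (y.2.2 k)⁻¹ * y.2.1 j k =
        (if k ∈ T then (Q i k₁ * (g k₁)⁻¹ * R j k₁) / z else
          Q i (c k) * (g (c k))⁻¹ * R j (c k)) := by
      intro k
      by_cases hk : k ∈ T
      · simp only [hydef, Matrix.of_apply, hk, if_true]
        have hg1 : g k₁ ≠ 0 := ne_of_gt hk₁
        rw [inv_div]
        field_simp
        all_goals ring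
      · simp only [hydef, Matrix.of_apply, hk, if_false]
    rw [Finset.sum_congr rfl fun k _ => hterm k]
    have := key (fun k => Q i k * (g k)⁻¹ * R j k) ((Q i k₁ * (g k₁)⁻¹ * R j k₁) / z)
      (fun k hk => by simp [hQ0 i k hk])
    rw [this, mul_div_cancel₀ _ hz0]
    ring
  -- entropy comparisons
  have hHQ : ∑ i, ∑ j, y.1 i j * (Real.log (y.1 i j) - 1) ≤
      ∑ i, ∑ k, Q i k * (Real.log (Q i k) - 1) := by
    refine Finset.sum_le_sum fun i _ => ?_
    have hite : ∀ j : Fin s, y.1 i j * (Real.log (y.1 i j) - 1) =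
        (if j ∈ T then Q i k₁ / z * (Real.log (Q i k₁ / z) - 1) else
          Q i (c j) * (Real.log (Q i (c j)) - 1)) := by
      intro j
      by_cases hj : j ∈ T <;> simp only [hydef, Matrix.of_apply, hj, if_true, if_false]
    rw [Finset.sum_congr rfl fun j _ => hite j]
    have := key (fun k => Q i k * (Real.log (Q i k) - 1))
      (Q i k₁ / z * (Real.log (Q i k₁ / z) - 1))
      (fun k hk => by simp [hQ0 i k hk])
    rw [this]
    have := phi_split (hQnn i k₁) hz1
    linarith
  have hHR : ∑ i, ∑ j, y.2.1 i j * (Real.log (y.2.1 i j) - 1) ≤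
      ∑ i, ∑ k, R i k * (Real.log (R i k) - 1) := by
    refine Finset.sum_le_sum fun i _ => ?_
    have hite : ∀ j : Fin s, y.2.1 i j * (Real.log (y.2.1 i j) - 1) =
        (if j ∈ T then R i k₁ / z * (Real.log (R i k₁ / z) - 1) else
          R i (c j) * (Real.log (R i (c j)) - 1)) := by
      intro j
      by_cases hj : j ∈ T <;> simp only [hydef, Matrix.of_apply, hj, if_true, if_false]
    rw [Finset.sum_congr rfl fun j _ => hite j]
    have := key (fun k => R i k * (Real.log (R i k) - 1))
      (R i k₁ / z * (Real.log (R i k₁ / z) - 1))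
      (fun k hk => by simp [hR0 i k hk])
    rw [this]
    have := phi_split (hRnn i k₁) hz1
    linarith
  have hHg : ∑ j, y.2.2 j * (Real.log (y.2.2 j) - 1) ≤
      ∑ k, g k * (Real.log (g k) - 1) := by
    have hite : ∀ j : Fin s, y.2.2 j * (Real.log (y.2.2 j) - 1) =
        (if j ∈ T then g k₁ / z * (Real.log (g k₁ / z) - 1) else
          g (c j) * (Real.log (g (c j)) - 1)) := by
      intro j
      by_cases hj : j ∈ T <;> simp only [hydef, hj, if_true, if_false]
    rw [Finset.sum_congr rfl fun j _ => hite j]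
    have := key (fun k => g k * (Real.log (g k) - 1))
      (g k₁ / z * (Real.log (g k₁ / z) - 1))
      (fun k hk => by simp [hk])
    rw [this]
    have := phi_split (hgnn k₁) hz1
    linarith
  have hHle : matH Q + matH R + vecH g ≤ matH y.1 + matH y.2.1 + vecH y.2.2 := by
    unfold matH vecH
    linarith
  unfold Fobj
  rw [htrans]
  have : ε * (matH Q + matH R + vecH g) ≤
      ε * (matH y.1 + matH y.2.1 + vecH y.2.2) := mul_le_mul_of_nonneg_left hHle hε
  linarith

end LOTAux

end AuxProof

/-- For `ε > 0` and `r ≥ 2`, if `LOT_{r,ε} < LOT_{r−1,ε}` then the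
infimum of `F_ε` over `𝒞(a,b,r)` is attained. -/
theorem Fobj_min_attained_of_strict_decrease {n m : ℕ}
    (a : Fin n → ℝ) (ha : a ∈ posSimplex n)
    (b : Fin m → ℝ) (hb : b ∈ posSimplex m)
    (C : Mat n m) (ε : ℝ) (hε : 0 < ε) (r : ℕ) (hr : 2 ≤ r)
    (hlt : LOTre a b C ε r < LOTre a b C ε (r - 1)) :
    ∃ x ∈ Cset a b r, ∀ y ∈ Cset a b r, Fobj C ε x ≤ Fobj C ε y := by
  classical
  obtain ⟨s, rfl⟩ : ∃ s, r = s + 1 := ⟨r - 1, (Nat.succ_pred_eq_of_pos (by omega)).symm⟩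
  obtain ⟨hapos, hasum⟩ := ha
  obtain ⟨hbpos, hbsum⟩ := hb
  have hCsub : ∀ {t : ℕ}, Cset a b t ⊆ LOTAux.Kset a b t := by
    intro t x hx
    exact ⟨⟨hx.1.1, hx.1.2.1, fun i => (hx.1.2.2.1 i).le, hx.1.2.2.2.1, hx.1.2.2.2.2⟩,
      hx.2⟩
  have hcmp : IsCompact (LOTAux.Kset a b (s+1)) :=
    LOTAux.isCompact_Kset hasum hbsum (fun i => (hapos i).le) (fun i => (hbpos i).le)
  have hconK := LOTAux.contOn_Fobj (r := s+1) a b C ε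
  have hne : (Cset a b (s+1)).Nonempty :=
    LOTAux.Cset_nonempty hasum hbsum (fun i => (hapos i).le) (fun i => (hbpos i).le)
      (Nat.succ_pos s)
  have hKne : (LOTAux.Kset a b (s+1)).Nonempty := hne.mono hCsub
  obtain ⟨x₀, hx₀K, hmin⟩ := hcmp.exists_isMinOn hKne hconK
  have hmin' : ∀ y ∈ LOTAux.Kset a b (s+1), Fobj C ε x₀ ≤ Fobj C ε y :=
    fun y hy => hmin hy
  by_cases hpos : ∀ k, 0 < x₀.2.2 k
  · exact ⟨x₀, ⟨⟨hx₀K.1.1, hx₀K.1.2.1, hpos, hx₀K.1.2.2.2.1, hx₀K.1.2.2.2.2⟩, hx₀K.2⟩,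
      fun y hy => hmin' y (hCsub hy)⟩
  · exfalso
    push_neg at hpos
    obtain ⟨k₀, hk₀⟩ := hpos
    have hg0 : x₀.2.2 k₀ = 0 := le_antisymm hk₀ (hx₀K.1.2.2.1 k₀)
    have hsg : ∑ k, x₀.2.2 k = 1 := LOTAux.sum_g_eq_one hasum hx₀K
    obtain ⟨k₁, hk₁⟩ : ∃ k, 0 < x₀.2.2 k := by
      by_contra hall
      push_neg at hall
      have : ∑ k, x₀.2.2 k = 0 := le_antisymm (Finset.sum_nonpos fun k _ => hall k)
        (Finset.sum_nonneg fun k _ => hx₀K.1.2.2.1 k)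
      rw [hsg] at this
      norm_num at this
    obtain ⟨y, hy, hFy⟩ := LOTAux.exists_reduced C hε.le x₀ hx₀K k₀ hg0 k₁ hk₁
    have hbdd : BddBelow (Fobj C ε '' Cset a b s) := by
      refine ⟨-(∑ i, ∑ j, |C i j|) - ε * ((n : ℝ) * s + (m : ℝ) * s + s), ?_⟩
      rintro v ⟨u, hu, rfl⟩
      exact LOTAux.Fobj_lower_bound hasum C hε.le (hCsub hu)
    have h1 : LOTre a b C ε s ≤ Fobj C ε y :=
      csInf_le hbdd (Set.mem_image_of_mem _ hy)
    have h2 : Fobj C ε x₀ ≤ LOTre a b C ε (s+1) := by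
      refine le_csInf (hne.image _) ?_
      rintro v ⟨u, hu, rfl⟩
      exact hmin' u (hCsub hu)
    have hss : s + 1 - 1 = s := rfl
    rw [hss] at hlt
    unfold LOTre at h1 h2 hlt
    linarith
end

section
/- Let a ∈ Δ_n^*, b ∈ Δ_m^*, C ∈ ℝ^{n×m}, ε ≥ 0 and r ≥ 2. Then LOT_{r,ε} ≤ LOT_{r−1,ε}. -/
open Matrix Finset Real
open scoped RealInnerProductSpace

/-!
A feasible triple of rank `r - 1` becomes a feasible triple of rank `r` by splitting one of its
columns into two halves, simultaneously in `Q`, `R` and `g`. Each rank-one piece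
`q_k g_k⁻¹ r_kᵀ` is homogeneous of degree one in `(q_k, r_k, g_k)`, so the plan
`Q Diag(1/g) Rᵀ` does not change, while splitting a mass `t` into two halves raises the entropy
by `t log 2 ≥ 0`. Hence `F_ε` does not increase. Since that plan is a coupling of `a` and `b` and
`t (log t - 1) ≥ -1`, the objective is bounded below on `𝒞(a,b,r)`, so its infimum is at most
the value at the split triple.
-/

lemma neg_one_le_mul_log_sub_one {t : ℝ} (ht : 0 ≤ t) : -1 ≤ t * (log t - 1) := by
  rcases ht.eq_or_lt with rfl | ht
  · simp
  · have h := mul_le_mul_of_nonneg_left (one_sub_inv_le_log_of_pos ht) ht.le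
    rw [mul_sub, mul_inv_cancel₀ ht.ne'] at h
    nlinarith

lemma mul_mul_log_mul_sub_one_le {w t : ℝ} (hw₀ : 0 < w) (hw₁ : w ≤ 1) (ht : 0 ≤ t) :
    (w * t) * (log (w * t) - 1) ≤ w * (t * (log t - 1)) := by
  rcases ht.eq_or_lt with rfl | ht
  · simp
  · rw [log_mul hw₀.ne' ht.ne']
    nlinarith [mul_pos hw₀ ht, log_nonpos hw₀.le hw₁]

lemma matH_le {n r : ℕ} {P : Mat n r} (hP : ∀ i k, 0 ≤ P i k) : matH P ≤ n * r := by
  have h : ∑ _i : Fin n, ∑ _k : Fin r, (-1 : ℝ) ≤ ∑ i, ∑ k, P i k * (log (P i k) - 1) :=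
    sum_le_sum fun i _ => sum_le_sum fun k _ => neg_one_le_mul_log_sub_one (hP i k)
  simp only [sum_const, card_univ, Fintype.card_fin, nsmul_eq_mul] at h
  rw [matH]
  linarith

lemma vecH_le {r : ℕ} {g : Fin r → ℝ} (hg : ∀ k, 0 ≤ g k) : vecH g ≤ r := by
  have h : ∑ _k : Fin r, (-1 : ℝ) ≤ ∑ k, g k * (log (g k) - 1) :=
    sum_le_sum fun k _ => neg_one_le_mul_log_sub_one (hg k)
  simp only [sum_const, card_univ, Fintype.card_fin, nsmul_eq_mul] at h
  rw [vecH]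
  linarith

lemma mul_diagonal_mul_transpose_apply {n m r : ℕ} (Q : Mat n r) (R : Mat m r)
    (d : Fin r → ℝ) (i : Fin n) (j : Fin m) :
    (Q * diagonal d * Rᵀ) i j = ∑ k, Q i k * d k * R j k := by
  rw [mul_apply]
  simp only [mul_diagonal, transpose_apply]

noncomputable def plan {n m r : ℕ} (x : LRTriple n m r) : Mat n m :=
  x.1 * diagonal (fun k => (x.2.2 k)⁻¹) * x.2.1ᵀ

section Coupling

variable {n m r : ℕ} {a : Fin n → ℝ} {b : Fin m → ℝ} {x : LRTriple n m r}

lemma plan_mem_couplings (hx : x ∈ Cset a b r) : plan x ∈ couplings a b := by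
  obtain ⟨⟨hQ, hR, hg, hQa, hRb⟩, -, -, -, hQg, hRg⟩ := hx
  refine ⟨fun i j => ?_, fun i => ?_, fun j => ?_⟩
  · rw [plan, mul_diagonal_mul_transpose_apply]
    exact sum_nonneg fun k _ => mul_nonneg (mul_nonneg (hQ i k) (inv_nonneg.2 (hg k).le)) (hR j k)
  · simp_rw [plan, mul_diagonal_mul_transpose_apply]
    rw [sum_comm, ← hQa i]
    refine sum_congr rfl fun k _ => ?_
    rw [← mul_sum, hRg k, mul_assoc, inv_mul_cancel₀ (hg k).ne', mul_one]
  · simp_rw [plan, mul_diagonal_mul_transpose_apply]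
    rw [sum_comm, ← hRb j]
    refine sum_congr rfl fun k _ => ?_
    rw [← sum_mul, ← sum_mul, hQg k, mul_inv_cancel₀ (hg k).ne', one_mul]

lemma neg_sum_abs_le_frobInner {P : Mat n m} (hP : P ∈ couplings a b)
    (ha : a ∈ posSimplex n) (C : Mat n m) : -∑ i, ∑ j, |C i j| ≤ frobInner C P := by
  obtain ⟨hP0, hPa, -⟩ := hP
  have hP1 : ∀ i j, P i j ≤ 1 := fun i j =>
    calc P i j ≤ a i := hPa i ▸ single_le_sum (fun j _ => hP0 i j) (mem_univ j)
      _ ≤ 1 := ha.2 ▸ single_le_sum (fun i _ => (ha.1 i).le) (mem_univ i)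
  rw [frobInner, ← sum_neg_distrib]
  refine sum_le_sum fun i _ => ?_
  rw [← sum_neg_distrib]
  refine sum_le_sum fun j _ => ?_
  nlinarith [neg_abs_le (C i j), le_abs_self (C i j), hP0 i j, hP1 i j]

lemma bddBelow_Fobj_image_Cset (ha : a ∈ posSimplex n) (C : Mat n m) {ε : ℝ} (hε : 0 ≤ ε) :
    BddBelow (Fobj C ε '' Cset a b r) := by
  refine ⟨-∑ i, ∑ j, |C i j| - ε * (n * r + m * r + r), ?_⟩
  rintro _ ⟨x, hx, rfl⟩
  have hplan := neg_sum_abs_le_frobInner (plan_mem_couplings hx) ha C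
  obtain ⟨⟨hQ, hR, hg, -⟩, -⟩ := hx
  have hH : matH x.1 + matH x.2.1 + vecH x.2.2 ≤ n * r + m * r + r := by
    linarith [matH_le hQ, matH_le hR, vecH_le fun k => (hg k).le]
  rw [Fobj, ← plan.eq_1]
  linarith [mul_le_mul_of_nonneg_left hH hε]

end Coupling

/-- Column `k` of the refined factors `splitCols w τ x` is `w k` times column `τ k` of `x`. -/
def IsColumnSplitting {r r' : ℕ} (w : Fin r' → ℝ) (τ : Fin r' → Fin r) : Prop :=
  (∀ k, 0 < w k) ∧ ∀ f : Fin r → ℝ, ∑ k, w k * f (τ k) = ∑ j, f j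

def splitCols {n m r r' : ℕ} (w : Fin r' → ℝ) (τ : Fin r' → Fin r) (x : LRTriple n m r) :
    LRTriple n m r' :=
  (of fun i k => w k * x.1 i (τ k), of fun j k => w k * x.2.1 j (τ k),
    fun k => w k * x.2.2 (τ k))

namespace IsColumnSplitting

variable {r r' : ℕ} {w : Fin r' → ℝ} {τ : Fin r' → Fin r}

lemma le_one (hs : IsColumnSplitting w τ) (k : Fin r') : w k ≤ 1 := by
  have h := hs.2 fun j => if j = τ k then 1 else 0
  simp only [sum_ite_eq', mem_univ, if_true] at h
  calc w k = w k * (if τ k = τ k then 1 else 0) := by simp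
    _ ≤ ∑ k', w k' * (if τ k' = τ k then 1 else 0) :=
      single_le_sum (f := fun k' => w k' * (if τ k' = τ k then 1 else 0))
        (fun k' _ => mul_nonneg (hs.1 k').le (by split_ifs <;> norm_num)) (mem_univ k)
    _ = 1 := h

lemma sum_mul_log_sub_one_le (hs : IsColumnSplitting w τ) {f : Fin r → ℝ}
    (hf : ∀ j, 0 ≤ f j) :
    ∑ k, (w k * f (τ k)) * (log (w k * f (τ k)) - 1) ≤ ∑ j, f j * (log (f j) - 1) :=
  calc _ ≤ ∑ k, w k * (f (τ k) * (log (f (τ k)) - 1)) :=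
        sum_le_sum fun k _ => mul_mul_log_mul_sub_one_le (hs.1 k) (hs.le_one k) (hf _)
    _ = _ := hs.2 fun j => f j * (log (f j) - 1)

variable {n m : ℕ} {a : Fin n → ℝ} {b : Fin m → ℝ} {x : LRTriple n m r}

lemma splitCols_mem_Cset (hs : IsColumnSplitting w τ) (hx : x ∈ Cset a b r) :
    splitCols w τ x ∈ Cset a b r' := by
  obtain ⟨⟨hQ, hR, hg, hQa, hRb⟩, -, -, -, hQg, hRg⟩ := hx
  have hQ' : ∀ i k, 0 ≤ w k * x.1 i (τ k) := fun i k => mul_nonneg (hs.1 k).le (hQ _ _)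
  have hR' : ∀ j k, 0 ≤ w k * x.2.1 j (τ k) := fun j k => mul_nonneg (hs.1 k).le (hR _ _)
  have hg' : ∀ k, 0 < w k * x.2.2 (τ k) := fun k => mul_pos (hs.1 k) (hg _)
  refine ⟨⟨hQ', hR', hg', fun i => ?_, fun j => ?_⟩,
    hQ', hR', fun k => (hg' k).le, fun k => ?_, fun k => ?_⟩
  · exact (hs.2 (x.1 i)).trans (hQa i)
  · exact (hs.2 (x.2.1 j)).trans (hRb j)
  · simp only [splitCols, of_apply, ← mul_sum, hQg]
  · simp only [splitCols, of_apply, ← mul_sum, hRg]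

lemma plan_splitCols (hs : IsColumnSplitting w τ) (hg : ∀ k, 0 < x.2.2 k) :
    plan (splitCols w τ x) = plan x := by
  ext i j
  simp only [plan, mul_diagonal_mul_transpose_apply, splitCols, of_apply]
  rw [← hs.2 fun l => x.1 i l * (x.2.2 l)⁻¹ * x.2.1 j l]
  refine sum_congr rfl fun k _ => ?_
  have hw := (hs.1 k).ne'
  have hgk := (hg (τ k)).ne'
  field_simp

lemma Fobj_splitCols_le (hs : IsColumnSplitting w τ) (C : Mat n m) {ε : ℝ} (hε : 0 ≤ ε)
    (hx : x ∈ Cset a b r) : Fobj C ε (splitCols w τ x) ≤ Fobj C ε x := by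
  obtain ⟨⟨hQ, hR, hg, -⟩, -⟩ := hx
  have hHQ : matH x.1 ≤ matH (splitCols w τ x).1 :=
    neg_le_neg (sum_le_sum fun i _ => hs.sum_mul_log_sub_one_le (hQ i))
  have hHR : matH x.2.1 ≤ matH (splitCols w τ x).2.1 :=
    neg_le_neg (sum_le_sum fun j _ => hs.sum_mul_log_sub_one_le (hR j))
  have hHg : vecH x.2.2 ≤ vecH (splitCols w τ x).2.2 :=
    neg_le_neg (hs.sum_mul_log_sub_one_le fun k => (hg k).le)
  rw [Fobj, Fobj, ← plan.eq_1, ← plan.eq_1, hs.plan_splitCols hg]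
  gcongr

end IsColumnSplitting

/-- Halve column `0`, the second half becoming the new last column. -/
lemma exists_isColumnSplitting_succ {s : ℕ} (hs : 0 < s) :
    ∃ (w : Fin (s + 1) → ℝ) (τ : Fin (s + 1) → Fin s), IsColumnSplitting w τ := by
  obtain ⟨t, rfl⟩ : ∃ t, s = t + 1 := ⟨s - 1, by omega⟩
  refine ⟨Fin.snoc (fun k => if k = 0 then 1 / 2 else 1) (1 / 2), Fin.snoc id 0,
    fun k => ?_, fun f => ?_⟩
  · induction k using Fin.lastCases with
    | last => norm_num
    | cast k => simp only [Fin.snoc_castSucc]; split_ifs <;> norm_num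
  · simp only [Fin.sum_univ_castSucc, Fin.snoc_castSucc, Fin.snoc_last, id,
      Fin.sum_univ_succ (n := t), Fin.succ_ne_zero, if_true, if_false, one_mul]
    ring

lemma Cset_nonempty {n m r : ℕ} {a : Fin n → ℝ} {b : Fin m → ℝ} (ha : a ∈ posSimplex n)
    (hb : b ∈ posSimplex m) (hr : 0 < r) : (Cset a b r).Nonempty := by
  have hr' : (0 : ℝ) < r := Nat.cast_pos.2 hr
  have hQ : ∀ (i : Fin n) (_ : Fin r), 0 ≤ a i / r := fun i _ => div_nonneg (ha.1 i).le hr'.le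
  have hR : ∀ (j : Fin m) (_ : Fin r), 0 ≤ b j / r := fun j _ => div_nonneg (hb.1 j).le hr'.le
  refine ⟨(of fun i _ => a i / r, of fun j _ => b j / r, fun _ => 1 / r),
    ⟨hQ, hR, fun _ => by positivity, fun i => ?_, fun j => ?_⟩,
    hQ, hR, fun _ => by positivity, fun k => ?_, fun k => ?_⟩ <;>
  simp only [of_apply, sum_const, card_univ, Fintype.card_fin, nsmul_eq_mul, ← sum_div,
    ha.2, hb.2] <;>
  field_simp

/-- For `ε ≥ 0` and `r ≥ 2`, `LOT_{r,ε} ≤ LOT_{r−1,ε}`. -/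
theorem LOTre_antitone {n m : ℕ}
    (a : Fin n → ℝ) (ha : a ∈ posSimplex n)
    (b : Fin m → ℝ) (hb : b ∈ posSimplex m)
    (C : Mat n m) (ε : ℝ) (hε : 0 ≤ ε) (r : ℕ) (hr : 2 ≤ r) :
    LOTre a b C ε r ≤ LOTre a b C ε (r - 1) := by
  obtain ⟨s, rfl⟩ : ∃ s, r = s + 1 := ⟨r - 1, by omega⟩
  have hs : 0 < s := by omega
  obtain ⟨w, τ, hsplit⟩ := exists_isColumnSplitting_succ hs
  refine le_csInf ((Cset_nonempty ha hb hs).image _) ?_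
  rintro _ ⟨x, hx, rfl⟩
  calc LOTre a b C ε (s + 1) ≤ Fobj C ε (splitCols w τ x) :=
        csInf_le (bddBelow_Fobj_image_Cset ha C hε) ⟨_, hsplit.splitCols_mem_Cset hx, rfl⟩
    _ ≤ Fobj C ε x := hsplit.Fobj_splitCols_le C hε hx
end

section
/- Let a ∈ Δ_n^*, b ∈ Δ_m^*, r ≥ 1 and 0 < α ≤ 1/r. Let ξ̃ = (Q̃, R̃, g̃) with Q̃ ∈ ℝ_{>0}^{n×r}, R̃ ∈ ℝ_{>0}^{m×r}, g̃ ∈ ℝ_{>0}^r. Then the unique minimizer of ζ ↦ KL(ζ, ξ̃) over C₁(a,b,r,α) is ( Diag(a/(Q̃ 1_r)) Q̃, Diag(b/(R̃ 1_r)) R̃, max(g̃, α) ), where the division and the maximum are taken entrywise. -/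
open Matrix Finset Real
open scoped RealInnerProductSpace

private lemma tangent_lt' (q s p : ℝ) (hq : 0 < q) (hs : 0 < s) (hp : 0 ≤ p) (hne : p ≠ s) :
    s * (Real.log (s / q) - 1) + Real.log (s / q) * (p - s) < p * (Real.log (p / q) - 1) := by
  rcases hp.eq_or_lt with h0 | hp'
  · rw [← h0]
    nlinarith [hs]
  · have hx : Real.log (s / p) < s / p - 1 :=
      Real.log_lt_sub_one_of_pos (by positivity)
        (fun h => hne ((div_eq_one_iff_eq hp'.ne').mp h).symm)
    have h2 : p * Real.log (s / p) < s - p := by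
      have h3 := (mul_lt_mul_iff_right₀ hp').mpr hx
      have h4 : p * (s / p) = s := by field_simp
      nlinarith [h3, h4]
    rw [Real.log_div hs.ne' hp'.ne'] at h2
    rw [Real.log_div hs.ne' hq.ne', Real.log_div hp'.ne' hq.ne']
    nlinarith [h2]

private lemma tangent_le' (q s p : ℝ) (hq : 0 < q) (hs : 0 < s) (hp : 0 ≤ p) :
    s * (Real.log (s / q) - 1) + Real.log (s / q) * (p - s) ≤ p * (Real.log (p / q) - 1) := by
  rcases eq_or_ne p s with rfl | hne
  · simp
  · exact (tangent_lt' q s p hq hs hp hne).le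

private lemma row_aux' {r : ℕ} (hr : 0 < r) {s : ℝ} (hs : 0 < s) {q p : Fin r → ℝ}
    (hq : ∀ j, 0 < q j) (hp : ∀ j, 0 ≤ p j) (hsum : ∑ j, p j = s) :
    (∑ j, (s / (∑ k, q k) * q j) * (Real.log ((s / (∑ k, q k) * q j) / q j) - 1)
      ≤ ∑ j, p j * (Real.log (p j / q j) - 1)) ∧
    ((p ≠ fun j => s / (∑ k, q k) * q j) →
      ∑ j, (s / (∑ k, q k) * q j) * (Real.log ((s / (∑ k, q k) * q j) / q j) - 1)
        < ∑ j, p j * (Real.log (p j / q j) - 1)) := by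
  have hne : (Finset.univ : Finset (Fin r)).Nonempty := ⟨⟨0, hr⟩, Finset.mem_univ _⟩
  have hSq : 0 < ∑ k, q k := Finset.sum_pos (fun j _ => hq j) hne
  set Sq := ∑ k, q k with hSqdef
  have hc : 0 < s / Sq := div_pos hs hSq
  have hzero : ∑ j, Real.log (s / Sq) * (p j - s / Sq * q j) = 0 := by
    rw [← Finset.mul_sum, Finset.sum_sub_distrib, hsum, ← Finset.mul_sum, ← hSqdef,
      div_mul_cancel₀ s hSq.ne', sub_self, mul_zero]
  have hlog : ∀ j, Real.log ((s / Sq * q j) / q j) = Real.log (s / Sq) := fun j => by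
    rw [mul_div_assoc, div_self (hq j).ne', mul_one]
  have hle : ∀ j, (s / Sq * q j) * (Real.log ((s / Sq * q j) / q j) - 1)
      + Real.log (s / Sq) * (p j - s / Sq * q j) ≤ p j * (Real.log (p j / q j) - 1) := by
    intro j
    have := tangent_le' (q j) (s / Sq * q j) (p j) (hq j) (mul_pos hc (hq j)) (hp j)
    simp only [hlog] at this ⊢; exact this
  have key : ∑ j, (s / Sq * q j) * (Real.log ((s / Sq * q j) / q j) - 1)
      = ∑ j, ((s / Sq * q j) * (Real.log ((s / Sq * q j) / q j) - 1)
        + Real.log (s / Sq) * (p j - s / Sq * q j)) := by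
    rw [Finset.sum_add_distrib, hzero, add_zero]
  constructor
  · rw [key]
    exact Finset.sum_le_sum fun j _ => hle j
  · intro hpne
    obtain ⟨j0, hj0⟩ := Function.ne_iff.mp hpne
    rw [key]
    refine Finset.sum_lt_sum (fun j _ => hle j) ⟨j0, Finset.mem_univ _, ?_⟩
    have := tangent_lt' (q j0) (s / Sq * q j0) (p j0) (hq j0) (mul_pos hc (hq j0)) (hp j0) hj0
    simp only [hlog] at this ⊢; exact this

private lemma g_aux' {gt α g : ℝ} (hgt : 0 < gt) (hα : 0 < α) (hg : α ≤ g) :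
    (max gt α * (Real.log (max gt α / gt) - 1) ≤ g * (Real.log (g / gt) - 1)) ∧
    (g ≠ max gt α → max gt α * (Real.log (max gt α / gt) - 1) < g * (Real.log (g / gt) - 1)) := by
  have hs : 0 < max gt α := lt_max_of_lt_left hgt
  have hg0 : 0 ≤ g := le_trans hα.le hg
  have hcorr : 0 ≤ Real.log (max gt α / gt) * (g - max gt α) := by
    rcases le_total α gt with h | h
    · rw [max_eq_left h, div_self hgt.ne', Real.log_one, zero_mul]
    · rw [max_eq_right h]
      exact mul_nonneg (Real.log_nonneg ((one_le_div hgt).mpr h)) (by linarith)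
  constructor
  · have := tangent_le' gt (max gt α) g hgt hs hg0
    linarith
  · intro hne
    have := tangent_lt' gt (max gt α) g hgt hs hg0 hne
    linarith

/-- KL projection onto `𝒞₁(a,b,r,α)`: the unique minimizer of
`ζ ↦ KL(ζ, (Q̃,R̃,g̃))` over `𝒞₁(a,b,r,α)` is
`(Diag(a/(Q̃1)) Q̃, Diag(b/(R̃1)) R̃, max(g̃,α))`. -/
theorem KL_projection_C1_alpha {n m : ℕ} (r : ℕ) (hr : 1 ≤ r)
    (a : Fin n → ℝ) (ha : a ∈ posSimplex n)
    (b : Fin m → ℝ) (hb : b ∈ posSimplex m)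
    (α : ℝ) (hα : 0 < α) (hα' : α ≤ 1 / (r : ℝ))
    (Qt : Mat n r) (hQt : ∀ i j, 0 < Qt i j)
    (Rt : Mat m r) (hRt : ∀ i j, 0 < Rt i j)
    (gt : Fin r → ℝ) (hgt : ∀ i, 0 < gt i)
    (cand : LRTriple n m r)
    (hcand : cand =
      (Matrix.of fun i j => a i / (∑ k, Qt i k) * Qt i j,
       Matrix.of fun i j => b i / (∑ k, Rt i k) * Rt i j,
       fun i => max (gt i) α)) :
    cand ∈ C1setAlpha a b r α ∧
      ∀ ζ ∈ C1setAlpha a b r α, ζ ≠ cand →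
        tripleKL cand (Qt, Rt, gt) < tripleKL ζ (Qt, Rt, gt) := by
  obtain ⟨haPos, -⟩ := ha
  obtain ⟨hbPos, -⟩ := hb
  have hr0 : 0 < r := hr
  have hSQ : ∀ i, 0 < ∑ k, Qt i k := fun i =>
    Finset.sum_pos (fun k _ => hQt i k) ⟨⟨0, hr0⟩, Finset.mem_univ _⟩
  have hSR : ∀ i, 0 < ∑ k, Rt i k := fun i =>
    Finset.sum_pos (fun k _ => hRt i k) ⟨⟨0, hr0⟩, Finset.mem_univ _⟩
  subst hcand
  constructor
  · refine ⟨fun i j => ?_, fun i j => ?_, fun i => le_max_right _ _, fun i => ?_, fun i => ?_⟩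
    · exact mul_nonneg (div_nonneg (haPos i).le (hSQ i).le) (hQt i j).le
    · exact mul_nonneg (div_nonneg (hbPos i).le (hSR i).le) (hRt i j).le
    · simp only [Matrix.of_apply]
      rw [← Finset.mul_sum, div_mul_cancel₀ _ (hSQ i).ne']
    · simp only [Matrix.of_apply]
      rw [← Finset.mul_sum, div_mul_cancel₀ _ (hSR i).ne']
  · rintro ⟨Q, R, g⟩ ⟨hQ0, hR0, hgα, hQs, hRs⟩ hne
    simp only [tripleKL, matKL, vecKL, Matrix.of_apply]
    have hQle : ∑ i, ∑ j, (a i / (∑ k, Qt i k) * Qt i j) *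
          (Real.log ((a i / (∑ k, Qt i k) * Qt i j) / Qt i j) - 1)
        ≤ ∑ i, ∑ j, Q i j * (Real.log (Q i j / Qt i j) - 1) :=
      Finset.sum_le_sum fun i _ =>
        (row_aux' hr0 (haPos i) (fun j => hQt i j) (fun j => hQ0 i j) (hQs i)).1
    have hRle : ∑ i, ∑ j, (b i / (∑ k, Rt i k) * Rt i j) *
          (Real.log ((b i / (∑ k, Rt i k) * Rt i j) / Rt i j) - 1)
        ≤ ∑ i, ∑ j, R i j * (Real.log (R i j / Rt i j) - 1) :=
      Finset.sum_le_sum fun i _ =>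
        (row_aux' hr0 (hbPos i) (fun j => hRt i j) (fun j => hR0 i j) (hRs i)).1
    have hgle : ∑ i, max (gt i) α * (Real.log (max (gt i) α / gt i) - 1)
        ≤ ∑ i, g i * (Real.log (g i / gt i) - 1) :=
      Finset.sum_le_sum fun i _ => (g_aux' (hgt i) hα (hgα i)).1
    have hcase : Q ≠ (Matrix.of fun i j => a i / (∑ k, Qt i k) * Qt i j) ∨
        R ≠ (Matrix.of fun i j => b i / (∑ k, Rt i k) * Rt i j) ∨
        g ≠ (fun i => max (gt i) α) := by
      by_contra hc
      push_neg at hc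
      exact hne (by rw [hc.1, hc.2.1, hc.2.2])
    rcases hcase with h | h | h
    · have hex : ∃ i0, Q i0 ≠ fun j => a i0 / (∑ k, Qt i0 k) * Qt i0 j := by
        by_contra hc
        push_neg at hc
        exact h (Matrix.ext fun i j => by
          have := congrFun (hc i) j
          simpa using this)
      obtain ⟨i0, hi0⟩ := hex
      have hQlt : ∑ i, ∑ j, (a i / (∑ k, Qt i k) * Qt i j) *
            (Real.log ((a i / (∑ k, Qt i k) * Qt i j) / Qt i j) - 1)
          < ∑ i, ∑ j, Q i j * (Real.log (Q i j / Qt i j) - 1) :=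
        Finset.sum_lt_sum
          (fun i _ => (row_aux' hr0 (haPos i) (fun j => hQt i j) (fun j => hQ0 i j) (hQs i)).1)
          ⟨i0, Finset.mem_univ _,
            (row_aux' hr0 (haPos i0) (fun j => hQt i0 j) (fun j => hQ0 i0 j) (hQs i0)).2 hi0⟩
      linarith
    · have hex : ∃ i0, R i0 ≠ fun j => b i0 / (∑ k, Rt i0 k) * Rt i0 j := by
        by_contra hc
        push_neg at hc
        exact h (Matrix.ext fun i j => by
          have := congrFun (hc i) j
          simpa using this)
      obtain ⟨i0, hi0⟩ := hex
      have hRlt : ∑ i, ∑ j, (b i / (∑ k, Rt i k) * Rt i j) *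
            (Real.log ((b i / (∑ k, Rt i k) * Rt i j) / Rt i j) - 1)
          < ∑ i, ∑ j, R i j * (Real.log (R i j / Rt i j) - 1) :=
        Finset.sum_lt_sum
          (fun i _ => (row_aux' hr0 (hbPos i) (fun j => hRt i j) (fun j => hR0 i j) (hRs i)).1)
          ⟨i0, Finset.mem_univ _,
            (row_aux' hr0 (hbPos i0) (fun j => hRt i0 j) (fun j => hR0 i0 j) (hRs i0)).2 hi0⟩
      linarith
    · obtain ⟨i0, hi0⟩ := Function.ne_iff.mp h
      have hglt : ∑ i, max (gt i) α * (Real.log (max (gt i) α / gt i) - 1)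
          < ∑ i, g i * (Real.log (g i / gt i) - 1) :=
        Finset.sum_lt_sum (fun i _ => (g_aux' (hgt i) hα (hgα i)).1)
          ⟨i0, Finset.mem_univ _, (g_aux' (hgt i0) hα (hgα i0)).2 hi0⟩
      linarith
end

section
/- Let r, n, m ≥ 1 and let ξ̃ = (Q̃, R̃, g̃) with Q̃ ∈ ℝ_{>0}^{n×r}, R̃ ∈ ℝ_{>0}^{m×r}, g̃ ∈ ℝ_{>0}^r. Define g := (g̃ ⊙ (Q̃ᵀ 1_n) ⊙ (R̃ᵀ 1_m))^{1/3} entrywise (⊙ denoting the entrywise product). Then the unique minimizer of ζ ↦ KL(ζ, ξ̃) over C₂(r) is ( Q̃ Diag(g/(Q̃ᵀ 1_n)), R̃ Diag(g/(R̃ᵀ 1_m)), g ), where the division is entrywise. -/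
open Matrix Finset Real
open scoped RealInnerProductSpace

section KLaux

private lemma gibbs_eq (q c : ℝ) (hq : 0 < q) :
    (q * Real.exp c) * (Real.log (q * Real.exp c / q) - 1)
      = c * (q * Real.exp c) - q * Real.exp c := by
  rw [mul_comm q (Real.exp c), mul_div_assoc, div_self hq.ne', mul_one, Real.log_exp]
  ring

private lemma gibbs_le (x q c : ℝ) (hx : 0 ≤ x) (hq : 0 < q) :
    c * x - q * Real.exp c ≤ x * (Real.log (x / q) - 1) := by
  rcases hx.lt_or_eq with h | h
  · have hy : 0 < q * Real.exp c := by positivity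
    have hlog : Real.log (q * Real.exp c / x) ≤ q * Real.exp c / x - 1 :=
      Real.log_le_sub_one_of_pos (by positivity)
    have h1 : Real.log (q * Real.exp c / x) = Real.log q + c - Real.log x := by
      rw [Real.log_div hy.ne' h.ne', Real.log_mul hq.ne' (Real.exp_ne_zero c), Real.log_exp]
    have h2 : Real.log (x / q) = Real.log x - Real.log q := Real.log_div h.ne' hq.ne'
    have h3 : x * (q * Real.exp c / x) = q * Real.exp c := by field_simp
    rw [h1] at hlog
    have h4 := mul_le_mul_of_nonneg_left hlog h.le
    rw [h2]; nlinarith [h4, h3]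
  · have hy : 0 < q * Real.exp c := by positivity
    rw [← h]; simp; nlinarith
 
private lemma gibbs_lt (x q c : ℝ) (hx : 0 ≤ x) (hq : 0 < q)
    (hne : x ≠ q * Real.exp c) :
    c * x - q * Real.exp c < x * (Real.log (x / q) - 1) := by
  rcases hx.lt_or_eq with h | h
  · have hy : 0 < q * Real.exp c := by positivity
    have hne1 : q * Real.exp c / x ≠ 1 := by
      intro hone
      rw [div_eq_one_iff_eq h.ne'] at hone
      exact hne hone.symm
    have hlog : Real.log (q * Real.exp c / x) < q * Real.exp c / x - 1 :=
      Real.log_lt_sub_one_of_pos (by positivity) hne1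
    have h1 : Real.log (q * Real.exp c / x) = Real.log q + c - Real.log x := by
      rw [Real.log_div hy.ne' h.ne', Real.log_mul hq.ne' (Real.exp_ne_zero c), Real.log_exp]
    have h2 : Real.log (x / q) = Real.log x - Real.log q := Real.log_div h.ne' hq.ne'
    have h3 : x * (q * Real.exp c / x) = q * Real.exp c := by field_simp
    rw [h1] at hlog
    have h4 := (mul_lt_mul_iff_right₀ h).mpr hlog
    rw [h2]; nlinarith [h4, h3]
  · have hy : 0 < q * Real.exp c := by positivity
    rw [← h]; simp; nlinarith

end KLaux

private lemma KL_nested_lt {N R : ℕ} (Z W : Matrix (Fin N) (Fin R) ℝ) (lam : Fin R → ℝ)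
    (hZ : ∀ i k, 0 ≤ Z i k) (hW : ∀ i k, 0 < W i k)
    (i0 : Fin N) (k0 : Fin R) (hne : Z i0 k0 ≠ W i0 k0 * Real.exp (lam k0)) :
    ∑ i, ∑ k, (lam k * Z i k - W i k * Real.exp (lam k)) < matKL Z W := by
  refine Finset.sum_lt_sum
    (fun i _ => Finset.sum_le_sum fun k _ => gibbs_le _ _ _ (hZ i k) (hW i k))
    ⟨i0, Finset.mem_univ _, Finset.sum_lt_sum
      (fun k _ => gibbs_le _ _ _ (hZ i0 k) (hW i0 k))
      ⟨k0, Finset.mem_univ _, gibbs_lt _ _ _ (hZ i0 k0) (hW i0 k0) hne⟩⟩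

private lemma KL_nested_le {N R : ℕ} (Z W : Matrix (Fin N) (Fin R) ℝ) (lam : Fin R → ℝ)
    (hZ : ∀ i k, 0 ≤ Z i k) (hW : ∀ i k, 0 < W i k) :
    ∑ i, ∑ k, (lam k * Z i k - W i k * Real.exp (lam k)) ≤ matKL Z W :=
  Finset.sum_le_sum fun i _ => Finset.sum_le_sum fun k _ => gibbs_le _ _ _ (hZ i k) (hW i k)


/-- KL projection onto `𝒞₂(r)`: with
`g = (g̃ ⊙ (Q̃ᵀ1) ⊙ (R̃ᵀ1))^{1/3}` entrywise, the unique minimizer of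
`ζ ↦ KL(ζ, (Q̃,R̃,g̃))` over `𝒞₂(r)` is `(Q̃ Diag(g/(Q̃ᵀ1)), R̃ Diag(g/(R̃ᵀ1)), g)`. -/
theorem KL_projection_C2 {n m r : ℕ} (hn : 1 ≤ n) (hm : 1 ≤ m) (hr : 1 ≤ r)
    (Qt : Mat n r) (hQt : ∀ i j, 0 < Qt i j)
    (Rt : Mat m r) (hRt : ∀ i j, 0 < Rt i j)
    (gt : Fin r → ℝ) (hgt : ∀ i, 0 < gt i)
    (g : Fin r → ℝ)
    (hg : g = fun k => (gt k * (∑ i, Qt i k) * (∑ j, Rt j k)) ^ ((1 : ℝ) / 3))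
    (cand : LRTriple n m r)
    (hcand : cand =
      (Matrix.of fun i k => Qt i k * (g k / ∑ i', Qt i' k),
       Matrix.of fun j k => Rt j k * (g k / ∑ j', Rt j' k),
       g)) :
    cand ∈ C2set r ∧
      ∀ ζ ∈ C2set r, ζ ≠ cand →
        tripleKL cand (Qt, Rt, gt) < tripleKL ζ (Qt, Rt, gt) := by
  subst hcand
  have hnN : (Finset.univ : Finset (Fin n)).Nonempty := ⟨⟨0, hn⟩, Finset.mem_univ _⟩
  have hmN : (Finset.univ : Finset (Fin m)).Nonempty := ⟨⟨0, hm⟩, Finset.mem_univ _⟩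
  have hs : ∀ k, 0 < ∑ i, Qt i k := fun k => Finset.sum_pos (fun i _ => hQt i k) hnN
  have ht : ∀ k, 0 < ∑ j, Rt j k := fun k => Finset.sum_pos (fun j _ => hRt j k) hmN
  have hgpos : ∀ k, 0 < g k := by
    intro k
    have h0 : 0 < gt k * (∑ i, Qt i k) * (∑ j, Rt j k) := mul_pos (mul_pos (hgt k) (hs k)) (ht k)
    simp only [hg]; positivity
  have hg3 : ∀ k, g k ^ 3 = gt k * (∑ i, Qt i k) * (∑ j, Rt j k) := by
    intro k
    have h0 : 0 < gt k * (∑ i, Qt i k) * (∑ j, Rt j k) := mul_pos (mul_pos (hgt k) (hs k)) (ht k)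
    simp only [hg]
    rw [← Real.rpow_natCast ((gt k * (∑ i, Qt i k) * (∑ j, Rt j k)) ^ ((1:ℝ)/3)) 3,
        ← Real.rpow_mul h0.le]
    norm_num
  set lam : Fin r → ℝ := fun k => Real.log (g k / ∑ i, Qt i k) with hlam
  set mu : Fin r → ℝ := fun k => Real.log (g k / ∑ j, Rt j k) with hmu
  set nu : Fin r → ℝ := fun k => Real.log (g k / gt k) with hnu
  have helam : ∀ k, Real.exp (lam k) = g k / ∑ i, Qt i k := fun k =>
    Real.exp_log (div_pos (hgpos k) (hs k))
  have hemu : ∀ k, Real.exp (mu k) = g k / ∑ j, Rt j k := fun k =>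
    Real.exp_log (div_pos (hgpos k) (ht k))
  have henu : ∀ k, Real.exp (nu k) = g k / gt k := fun k =>
    Real.exp_log (div_pos (hgpos k) (hgt k))
  have hsum0 : ∀ k, lam k + mu k + nu k = 0 := by
    intro k
    have h1 : Real.log (g k ^ 3)
        = Real.log (gt k) + Real.log (∑ i, Qt i k) + Real.log (∑ j, Rt j k) := by
      rw [hg3 k, Real.log_mul (mul_pos (hgt k) (hs k)).ne' (ht k).ne',
        Real.log_mul (hgt k).ne' (hs k).ne']
    have h2 : Real.log (g k ^ 3) = 3 * Real.log (g k) := by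
      rw [Real.log_pow]; push_cast; ring
    simp only [hlam, hmu, hnu, Real.log_div (hgpos k).ne' (hs k).ne',
      Real.log_div (hgpos k).ne' (ht k).ne', Real.log_div (hgpos k).ne' (hgt k).ne']
    linarith
  have hQcol : ∀ k, ∑ i, Qt i k * Real.exp (lam k) = g k := by
    intro k
    rw [← Finset.sum_mul, helam k, mul_comm, div_mul_cancel₀ _ (hs k).ne']
  have hRcol : ∀ k, ∑ j, Rt j k * Real.exp (mu k) = g k := by
    intro k
    rw [← Finset.sum_mul, hemu k, mul_comm, div_mul_cancel₀ _ (ht k).ne']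
  have hgcol : ∀ k, gt k * Real.exp (nu k) = g k := by
    intro k
    rw [henu k, mul_comm, div_mul_cancel₀ _ (hgt k).ne']
  -- candidate entries in Gibbs form
  have hc1 : ∀ i k, Qt i k * (g k / ∑ i', Qt i' k) = Qt i k * Real.exp (lam k) := by
    intro i k; rw [helam k]
  have hc2 : ∀ j k, Rt j k * (g k / ∑ j', Rt j' k) = Rt j k * Real.exp (mu k) := by
    intro j k; rw [hemu k]
  -- membership
  have hmem : (Matrix.of fun i k => Qt i k * (g k / ∑ i', Qt i' k),
       Matrix.of fun j k => Rt j k * (g k / ∑ j', Rt j' k),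
       g) ∈ C2set (n := n) (m := m) r := by
    refine ⟨fun i k => ?_, fun j k => ?_, fun k => (hgpos k).le, fun k => ?_, fun k => ?_⟩
    · simp only [Matrix.of_apply]
      exact (mul_pos (hQt i k) (div_pos (hgpos k) (hs k))).le
    · simp only [Matrix.of_apply]
      exact (mul_pos (hRt j k) (div_pos (hgpos k) (ht k))).le
    · simp only [Matrix.of_apply, hc1]
      exact hQcol k
    · simp only [Matrix.of_apply, hc2]
      exact hRcol k
  -- value at the candidate
  have hval : tripleKL (Matrix.of fun i k => Qt i k * (g k / ∑ i', Qt i' k),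
       Matrix.of fun j k => Rt j k * (g k / ∑ j', Rt j' k),
       g) (Qt, Rt, gt) = -3 * ∑ k, g k := by
    have hQpart : matKL (Matrix.of fun i k => Qt i k * (g k / ∑ i', Qt i' k)) Qt
        = ∑ k, (lam k - 1) * g k := by
      unfold matKL
      rw [Finset.sum_comm]
      refine Finset.sum_congr rfl fun k _ => ?_
      calc ∑ i, (Matrix.of fun i k => Qt i k * (g k / ∑ i', Qt i' k)) i k *
              (Real.log ((Matrix.of fun i k => Qt i k * (g k / ∑ i', Qt i' k)) i k / Qt i k) - 1)
          = ∑ i, (lam k * (Qt i k * Real.exp (lam k)) - Qt i k * Real.exp (lam k)) := by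
            refine Finset.sum_congr rfl fun i _ => ?_
            simp only [Matrix.of_apply, hc1]
            exact gibbs_eq (Qt i k) (lam k) (hQt i k)
        _ = (lam k - 1) * g k := by
            rw [Finset.sum_sub_distrib, ← Finset.mul_sum, hQcol k]; ring
    have hRpart : matKL (Matrix.of fun j k => Rt j k * (g k / ∑ j', Rt j' k)) Rt
        = ∑ k, (mu k - 1) * g k := by
      unfold matKL
      rw [Finset.sum_comm]
      refine Finset.sum_congr rfl fun k _ => ?_
      calc ∑ j, (Matrix.of fun j k => Rt j k * (g k / ∑ j', Rt j' k)) j k *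
              (Real.log ((Matrix.of fun j k => Rt j k * (g k / ∑ j', Rt j' k)) j k / Rt j k) - 1)
          = ∑ j, (mu k * (Rt j k * Real.exp (mu k)) - Rt j k * Real.exp (mu k)) := by
            refine Finset.sum_congr rfl fun j _ => ?_
            simp only [Matrix.of_apply, hc2]
            exact gibbs_eq (Rt j k) (mu k) (hRt j k)
        _ = (mu k - 1) * g k := by
            rw [Finset.sum_sub_distrib, ← Finset.mul_sum, hRcol k]; ring
    have hgpart : vecKL g gt = ∑ k, (nu k - 1) * g k := by
      unfold vecKL
      refine Finset.sum_congr rfl fun k _ => ?_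
      rw [← hgcol k]
      rw [gibbs_eq (gt k) (nu k) (hgt k)]
      ring
    unfold tripleKL
    rw [hQpart, hRpart, hgpart, ← Finset.sum_add_distrib, ← Finset.sum_add_distrib]
    rw [show (-3 : ℝ) * ∑ k, g k = ∑ k, (-3) * g k from (Finset.mul_sum _ _ _)]
    refine Finset.sum_congr rfl fun k _ => ?_
    linear_combination (g k) * hsum0 k
  refine ⟨hmem, fun ζ hζ hne => ?_⟩
  obtain ⟨hζQ, hζR, hζg, hcolQ, hcolR⟩ := hζ
  rw [hval]
  -- lower bounds for each block
  have hBQ : ∑ i, ∑ k, (lam k * ζ.1 i k - Qt i k * Real.exp (lam k))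
      = ∑ k, (lam k * ζ.2.2 k - g k) := by
    rw [Finset.sum_comm]
    refine Finset.sum_congr rfl fun k _ => ?_
    rw [Finset.sum_sub_distrib, ← Finset.mul_sum, hcolQ k, hQcol k]
  have hBR : ∑ j, ∑ k, (mu k * ζ.2.1 j k - Rt j k * Real.exp (mu k))
      = ∑ k, (mu k * ζ.2.2 k - g k) := by
    rw [Finset.sum_comm]
    refine Finset.sum_congr rfl fun k _ => ?_
    rw [Finset.sum_sub_distrib, ← Finset.mul_sum, hcolR k, hRcol k]
  have hBg : ∑ k, (nu k * ζ.2.2 k - gt k * Real.exp (nu k))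
      = ∑ k, (nu k * ζ.2.2 k - g k) := by
    refine Finset.sum_congr rfl fun k _ => ?_
    rw [hgcol k]
  have htot : (∑ k, (lam k * ζ.2.2 k - g k)) + (∑ k, (mu k * ζ.2.2 k - g k))
      + (∑ k, (nu k * ζ.2.2 k - g k)) = -3 * ∑ k, g k := by
    rw [← Finset.sum_add_distrib, ← Finset.sum_add_distrib,
      show (-3 : ℝ) * ∑ k, g k = ∑ k, (-3) * g k from (Finset.mul_sum _ _ _)]
    refine Finset.sum_congr rfl fun k _ => ?_
    linear_combination (ζ.2.2 k) * hsum0 k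
  have hQle : ∑ k, (lam k * ζ.2.2 k - g k) ≤ matKL ζ.1 Qt := by
    rw [← hBQ]; exact KL_nested_le _ _ _ hζQ hQt
  have hRle : ∑ k, (mu k * ζ.2.2 k - g k) ≤ matKL ζ.2.1 Rt := by
    rw [← hBR]; exact KL_nested_le _ _ _ hζR hRt
  have hgle : ∑ k, (nu k * ζ.2.2 k - g k) ≤ vecKL ζ.2.2 gt := by
    rw [← hBg]
    exact Finset.sum_le_sum fun k _ => gibbs_le _ _ _ (hζg k) (hgt k)
  have hdiff : ζ.1 ≠ (Matrix.of fun i k => Qt i k * (g k / ∑ i', Qt i' k)) ∨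
      ζ.2.1 ≠ (Matrix.of fun j k => Rt j k * (g k / ∑ j', Rt j' k)) ∨ ζ.2.2 ≠ g := by
    by_contra h
    push_neg at h
    exact hne (Prod.ext h.1 (Prod.ext h.2.1 h.2.2))
  unfold tripleKL
  rcases hdiff with hd | hd | hd
  · obtain ⟨i0, k0, hik⟩ : ∃ i0 k0,
        ζ.1 i0 k0 ≠ (Matrix.of fun i k => Qt i k * (g k / ∑ i', Qt i' k)) i0 k0 := by
      by_contra h
      push_neg at h
      exact hd (by ext i k; exact h i k)
    have hik' : ζ.1 i0 k0 ≠ Qt i0 k0 * Real.exp (lam k0) := by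
      simpa only [Matrix.of_apply, hc1] using hik
    have hlt : ∑ k, (lam k * ζ.2.2 k - g k) < matKL ζ.1 Qt := by
      rw [← hBQ]; exact KL_nested_lt _ _ _ hζQ hQt i0 k0 hik'
    linarith
  · obtain ⟨j0, k0, hjk⟩ : ∃ j0 k0,
        ζ.2.1 j0 k0 ≠ (Matrix.of fun j k => Rt j k * (g k / ∑ j', Rt j' k)) j0 k0 := by
      by_contra h
      push_neg at h
      exact hd (by ext j k; exact h j k)
    have hjk' : ζ.2.1 j0 k0 ≠ Rt j0 k0 * Real.exp (mu k0) := by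
      simpa only [Matrix.of_apply, hc2] using hjk
    have hlt : ∑ k, (mu k * ζ.2.2 k - g k) < matKL ζ.2.1 Rt := by
      rw [← hBR]; exact KL_nested_lt _ _ _ hζR hRt j0 k0 hjk'
    linarith
  · obtain ⟨k0, hk⟩ : ∃ k0, ζ.2.2 k0 ≠ g k0 := by
      by_contra h
      push_neg at h
      exact hd (funext h)
    have hk' : ζ.2.2 k0 ≠ gt k0 * Real.exp (nu k0) := by rw [hgcol k0]; exact hk
    have hlt : ∑ k, (nu k * ζ.2.2 k - g k) < vecKL ζ.2.2 gt := by
      rw [← hBg]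
      exact Finset.sum_lt_sum (fun k _ => gibbs_le _ _ _ (hζg k) (hgt k))
        ⟨k0, Finset.mem_univ _, gibbs_lt _ _ _ (hζg k0) (hgt k0) hk'⟩
    linarith
end

section
/- Let a ∈ Δ_n^*, b ∈ Δ_m^*, C ∈ ℝ^{n×m}, ε ≥ 0, r ≥ 1 and 0 < α ≤ 1/r. Set L_{ε,α} := sqrt( 3( 2‖C‖₂²/α⁴ + ((ε + 2‖C‖₂)/α³)² ) ), where ‖C‖₂ denotes the spectral norm of C. Then for all ξ₁ = (Q₁,R₁,g₁) and ξ₂ = (Q₂,R₂,g₂) in C(a,b,r,α) with strictly positive entries, ‖∇F_ε(ξ₁) − ∇F_ε(ξ₂)‖₂ ≤ L_{ε,α} ‖(log Q₁ − log Q₂, log R₁ − log R₂, log g₁ − log g₂)‖₂, where ∇F_ε(Q,R,g) := ( C R Diag(1/g) + ε log Q, Cᵀ Q Diag(1/g) + ε log R, −𝒟(Qᵀ C R)/g² + ε log g ), 𝒟(·) extracts the diagonal of a square matrix, logarithms, squares and divisions are entrywise, and ‖·‖₂ is the Euclidean norm of the concatenated triple (Frobenius norm on the matrix blocks). -/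
open Matrix Finset Real
open scoped RealInnerProductSpace

/-!
The gradient acts column by column: the `k`-th columns of the three blocks of `∇F_ε(Q, R, g)`
depend only on `(Q_{·k}, R_{·k}, g_k)`, so it suffices to bound one column. On `𝒞(a, b, r, α)`
the columns of `Q` and `R` are positive vectors of mass `g_k ∈ [α, 1]`, so their entries lie in
`(0, 1]`. As `exp` is `e^c`-Lipschitz on `(-∞, c]`, the maps `x ↦ x`, `x ↦ 1/x` and `x ↦ 1/x²` are
Lipschitz in `log x` there, with constants `1`, `1/α` and `2/α²`. Each block difference splits into
three terms, one per changed variable; bounding each by `‖C‖₂` and Cauchy–Schwarz and using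
`(a + b + c)² ≤ 3 (a² + b² + c²)` gives the constant `L_{ε,α}²` after summing over the columns.
-/

lemma abs_exp_sub_exp_le {s t c : ℝ} (hs : s ≤ c) (ht : t ≤ c) :
    |exp s - exp t| ≤ exp c * |s - t| := by
  wlog hts : t ≤ s generalizing s t
  · rw [abs_sub_comm, abs_sub_comm s]
    exact this ht hs (le_of_not_ge hts)
  rw [abs_of_nonneg (sub_nonneg.2 (exp_le_exp.2 hts)), abs_of_nonneg (sub_nonneg.2 hts)]
  have hexp : exp t = exp s * exp (t - s) := by rw [← exp_add, add_sub_cancel]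
  calc exp s - exp t = exp s * (1 - exp (t - s)) := by rw [hexp]; ring
    _ ≤ exp s * (s - t) :=
      mul_le_mul_of_nonneg_left (by linarith [add_one_le_exp (t - s)]) (exp_pos s).le
    _ ≤ exp c * (s - t) := by gcongr

lemma abs_sub_le_abs_log_sub_log {x y : ℝ} (hx : 0 < x) (hx₁ : x ≤ 1) (hy : 0 < y) (hy₁ : y ≤ 1) :
    |x - y| ≤ |log x - log y| := by
  simpa [exp_log hx, exp_log hy] using
    abs_exp_sub_exp_le (log_nonpos hx.le hx₁) (log_nonpos hy.le hy₁)

lemma abs_inv_pow_sub_inv_pow_le {α x y : ℝ} (hα : 0 < α) (hx : α ≤ x) (hy : α ≤ y) (p : ℕ) :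
    |(x ^ p)⁻¹ - (y ^ p)⁻¹| ≤ p * (α ^ p)⁻¹ * |log x - log y| := by
  have hexp : ∀ z, 0 < z → (z ^ p)⁻¹ = exp (-(p * log z)) := fun z hz => by
    rw [exp_neg, ← log_pow, exp_log (pow_pos hz p)]
  have hle : ∀ z, α ≤ z → -(p * log z) ≤ -(p * log α) := fun z hz => by
    gcongr
  rw [hexp x (hα.trans_le hx), hexp y (hα.trans_le hy), hexp α hα]
  calc _ ≤ exp (-(p * log α)) * |-(p * log x) - -(p * log y)| :=
        abs_exp_sub_exp_le (hle x hx) (hle y hy)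
    _ = _ := by
      rw [neg_sub_neg, ← mul_sub, abs_mul, abs_sub_comm, Nat.abs_cast]
      ring

lemma specNorm_nonneg {n m : ℕ} (C : Mat n m) : 0 ≤ specNorm C := norm_nonneg _

lemma specNorm_transpose {n m : ℕ} (C : Mat n m) : specNorm Cᵀ = specNorm C := by
  rw [specNorm, ← conjTranspose_eq_transpose_of_trivial, toEuclideanLin_conjTranspose_eq_adjoint,
    LinearMap.adjoint_toContinuousLinearMap, LinearIsometryEquiv.norm_map]
  rfl

lemma sum_sq_mulVec_le {n m : ℕ} (C : Mat n m) (v : Fin m → ℝ) :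
    ∑ i, (C *ᵥ v) i ^ 2 ≤ specNorm C ^ 2 * ∑ j, v j ^ 2 := by
  have h := (LinearMap.toContinuousLinearMap (toEuclideanLin C)).le_opNorm (WithLp.toLp 2 v)
  have h2 := pow_le_pow_left₀ (norm_nonneg _) h 2
  rwa [mul_pow, EuclideanSpace.real_norm_sq_eq, EuclideanSpace.real_norm_sq_eq] at h2

lemma sq_dotProduct_mulVec_le {n m : ℕ} (C : Mat n m) (u : Fin n → ℝ) (v : Fin m → ℝ) :
    (u ⬝ᵥ C *ᵥ v) ^ 2 ≤ specNorm C ^ 2 * (∑ i, u i ^ 2) * ∑ j, v j ^ 2 := by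
  calc (u ⬝ᵥ C *ᵥ v) ^ 2 ≤ (∑ i, u i ^ 2) * ∑ i, (C *ᵥ v) i ^ 2 := sum_mul_sq_le_sq_mul_sq _ _ _
    _ ≤ (∑ i, u i ^ 2) * (specNorm C ^ 2 * ∑ j, v j ^ 2) := by gcongr; exact sum_sq_mulVec_le C v
    _ = _ := by ring

lemma add_add_sq_le (a b c : ℝ) : (a + b + c) ^ 2 ≤ 3 * (a ^ 2 + b ^ 2 + c ^ 2) := by
  nlinarith [sq_nonneg (a - b), sq_nonneg (a - c), sq_nonneg (b - c)]

structure IsPosColumn {n : ℕ} (α g : ℝ) (q : Fin n → ℝ) : Prop where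
  pos : ∀ i, 0 < q i
  sum_eq : ∑ i, q i = g
  le_mass : α ≤ g
  mass_le_one : g ≤ 1

namespace IsPosColumn

variable {n : ℕ} {α g g' : ℝ} {q q' : Fin n → ℝ}

lemma le_one (hq : IsPosColumn α g q) (i : Fin n) : q i ≤ 1 :=
  calc q i ≤ ∑ j, q j := single_le_sum (fun j _ => (hq.pos j).le) (mem_univ i)
    _ = g := hq.sum_eq
    _ ≤ 1 := hq.mass_le_one

lemma sum_sq_le_sq (hq : IsPosColumn α g q) : ∑ i, q i ^ 2 ≤ g ^ 2 :=
  hq.sum_eq ▸ sum_sq_le_sq_sum_of_nonneg fun i _ => (hq.pos i).le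

lemma sum_sq_le_one (hq : IsPosColumn α g q) (hα : 0 ≤ α) : ∑ i, q i ^ 2 ≤ 1 :=
  hq.sum_sq_le_sq.trans (pow_le_one₀ (hα.trans hq.le_mass) hq.mass_le_one)

lemma sum_sq_sub_le_sum_sq_log_sub (hq : IsPosColumn α g q) (hq' : IsPosColumn α g' q') :
    ∑ i, (q i - q' i) ^ 2 ≤ ∑ i, (log (q i) - log (q' i)) ^ 2 :=
  sum_le_sum fun i _ => sq_le_sq.2 <|
    abs_sub_le_abs_log_sub_log (hq.pos i) (hq.le_one i) (hq'.pos i) (hq'.le_one i)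

end IsPosColumn

lemma sum_sq_sub_gradQ_column_le {n m : ℕ} (C : Mat n m) {ε α g₁ g₂ : ℝ} (hα : 0 < α)
    (q₁ q₂ : Fin n → ℝ) {r₁ r₂ : Fin m → ℝ}
    (hr₁ : IsPosColumn α g₁ r₁) (hr₂ : IsPosColumn α g₂ r₂) :
    ∑ i, ((C *ᵥ r₁) i * g₁⁻¹ + ε * log (q₁ i) - ((C *ᵥ r₂) i * g₂⁻¹ + ε * log (q₂ i))) ^ 2 ≤
      3 * (specNorm C ^ 2 * α⁻¹ ^ 2 * ∑ j, (log (r₁ j) - log (r₂ j)) ^ 2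
        + specNorm C ^ 2 * α⁻¹ ^ 2 * (log g₁ - log g₂) ^ 2
        + ε ^ 2 * ∑ i, (log (q₁ i) - log (q₂ i)) ^ 2) := by
  have hdecomp : ∀ i, (C *ᵥ r₁) i * g₁⁻¹ + ε * log (q₁ i) - ((C *ᵥ r₂) i * g₂⁻¹ + ε * log (q₂ i))
      = (C *ᵥ (r₁ - r₂)) i * g₁⁻¹ + (C *ᵥ r₂) i * (g₁⁻¹ - g₂⁻¹)
        + ε * (log (q₁ i) - log (q₂ i)) := fun i => by
    rw [mulVec_sub, Pi.sub_apply]; ring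
  have hinv₀ : 0 ≤ g₁⁻¹ := inv_nonneg.2 (hα.le.trans hr₁.le_mass)
  have hinv : g₁⁻¹ ≤ α⁻¹ := inv_anti₀ hα hr₁.le_mass
  have hΔinv : (g₁⁻¹ - g₂⁻¹) ^ 2 ≤ α⁻¹ ^ 2 * (log g₁ - log g₂) ^ 2 := by
    have h := abs_inv_pow_sub_inv_pow_le hα hr₁.le_mass hr₂.le_mass 1
    rw [← mul_pow, sq_le_sq, abs_mul, abs_of_pos (inv_pos.2 hα)]
    simpa using h
  have hΔr := hr₁.sum_sq_sub_le_sum_sq_log_sub hr₂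
  simp_rw [hdecomp]
  refine (sum_le_sum fun i _ => add_add_sq_le _ _ _).trans ?_
  simp only [← mul_sum, sum_add_distrib, mul_pow, ← sum_mul]
  gcongr 3 * (?_ + ?_ + ?_)
  · calc (∑ i, (C *ᵥ (r₁ - r₂)) i ^ 2) * g₁⁻¹ ^ 2
        ≤ (specNorm C ^ 2 * ∑ j, (r₁ - r₂) j ^ 2) * α⁻¹ ^ 2 := by
          gcongr
          exact sum_sq_mulVec_le C _
      _ ≤ (specNorm C ^ 2 * ∑ j, (log (r₁ j) - log (r₂ j)) ^ 2) * α⁻¹ ^ 2 := by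
          simp only [Pi.sub_apply]; gcongr
      _ = _ := by ring
  · calc (∑ i, (C *ᵥ r₂) i ^ 2) * (g₁⁻¹ - g₂⁻¹) ^ 2
        ≤ (specNorm C ^ 2 * 1) * (α⁻¹ ^ 2 * (log g₁ - log g₂) ^ 2) := by
          gcongr
          exact (sum_sq_mulVec_le C _).trans (by gcongr; exact hr₂.sum_sq_le_one hα.le)
      _ = _ := by ring
  · rfl

lemma sq_sub_gradG_column_le {n m : ℕ} (C : Mat n m) {ε α g₁ g₂ : ℝ} (hε : 0 ≤ ε) (hα : 0 < α)
    {q₁ q₂ : Fin n → ℝ} {r₁ r₂ : Fin m → ℝ} (hq₁ : IsPosColumn α g₁ q₁)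
    (hq₂ : IsPosColumn α g₂ q₂) (hr₁ : IsPosColumn α g₁ r₁) (hr₂ : IsPosColumn α g₂ r₂) :
    (-(q₁ ᵥ* C ⬝ᵥ r₁) / g₁ ^ 2 + ε * log g₁ - (-(q₂ ᵥ* C ⬝ᵥ r₂) / g₂ ^ 2 + ε * log g₂)) ^ 2 ≤
      3 * (specNorm C ^ 2 * α⁻¹ ^ 2 * ∑ i, (log (q₁ i) - log (q₂ i)) ^ 2
        + specNorm C ^ 2 * α⁻¹ ^ 4 * ∑ j, (log (r₁ j) - log (r₂ j)) ^ 2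
        + ((2 * specNorm C + ε) * α⁻¹ ^ 2) ^ 2 * (log g₁ - log g₂) ^ 2) := by
  set K := specNorm C
  set M := q₂ ⬝ᵥ C *ᵥ r₂
  have hg₁ : 0 < g₁ := hα.trans_le hq₁.le_mass
  have hg₂ : 0 < g₂ := hα.trans_le hq₂.le_mass
  have hK : 0 ≤ K := specNorm_nonneg C
  have hα₁ : 1 ≤ (α ^ 2)⁻¹ :=
    (one_le_inv₀ (by positivity)).2 (pow_le_one₀ hα.le (hq₁.le_mass.trans hq₁.mass_le_one))
  have hdecomp : -(q₁ ᵥ* C ⬝ᵥ r₁) / g₁ ^ 2 + ε * log g₁ - (-(q₂ ᵥ* C ⬝ᵥ r₂) / g₂ ^ 2 + ε * log g₂)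
      = -((q₁ - q₂) ⬝ᵥ C *ᵥ r₁) / g₁ ^ 2 + -(q₂ ⬝ᵥ C *ᵥ (r₁ - r₂)) / g₁ ^ 2
        + (ε * (log g₁ - log g₂) - M * ((g₁ ^ 2)⁻¹ - (g₂ ^ 2)⁻¹)) := by
    rw [← dotProduct_mulVec, ← dotProduct_mulVec, sub_dotProduct, mulVec_sub, dotProduct_sub]
    field_simp
    ring
  have hM : |M| ≤ K := by
    refine abs_le_of_sq_le_sq ((sq_dotProduct_mulVec_le C q₂ r₂).trans ?_) hK
    calc K ^ 2 * (∑ i, q₂ i ^ 2) * ∑ j, r₂ j ^ 2 ≤ K ^ 2 * 1 * 1 := by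
          gcongr
          exacts [hq₂.sum_sq_le_one hα.le, hr₂.sum_sq_le_one hα.le]
      _ = K ^ 2 := by ring
  have hΔ := abs_inv_pow_sub_inv_pow_le hα hq₁.le_mass hq₂.le_mass 2
  rw [hdecomp]
  refine (add_add_sq_le _ _ _).trans ?_
  gcongr 3 * (?_ + ?_ + ?_)
  · calc (-((q₁ - q₂) ⬝ᵥ C *ᵥ r₁) / g₁ ^ 2) ^ 2 = ((q₁ - q₂) ⬝ᵥ C *ᵥ r₁) ^ 2 / g₁ ^ 4 := by ring
      _ ≤ K ^ 2 * (∑ i, (log (q₁ i) - log (q₂ i)) ^ 2) * g₁ ^ 2 / g₁ ^ 4 := by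
          gcongr
          refine (sq_dotProduct_mulVec_le C _ r₁).trans ?_
          simp only [Pi.sub_apply]
          gcongr K ^ 2 * ?_ * ?_
          exacts [hq₁.sum_sq_sub_le_sum_sq_log_sub hq₂, hr₁.sum_sq_le_sq]
      _ = K ^ 2 * g₁⁻¹ ^ 2 * ∑ i, (log (q₁ i) - log (q₂ i)) ^ 2 := by field_simp
      _ ≤ _ := by gcongr; exact hq₁.le_mass
  · calc (-(q₂ ⬝ᵥ C *ᵥ (r₁ - r₂)) / g₁ ^ 2) ^ 2 = (q₂ ⬝ᵥ C *ᵥ (r₁ - r₂)) ^ 2 / g₁ ^ 4 := by ring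
      _ ≤ K ^ 2 * 1 * (∑ j, (log (r₁ j) - log (r₂ j)) ^ 2) / g₁ ^ 4 := by
          gcongr
          refine (sq_dotProduct_mulVec_le C q₂ _).trans ?_
          simp only [Pi.sub_apply]
          gcongr K ^ 2 * ?_ * ?_
          exacts [hq₂.sum_sq_le_one hα.le, hr₁.sum_sq_sub_le_sum_sq_log_sub hr₂]
      _ = K ^ 2 * g₁⁻¹ ^ 4 * ∑ j, (log (r₁ j) - log (r₂ j)) ^ 2 := by field_simp
      _ ≤ _ := by gcongr; exact hq₁.le_mass
  · have hcoef : 0 ≤ (2 * K + ε) * α⁻¹ ^ 2 := by positivity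
    rw [← mul_pow, sq_le_sq, abs_mul, abs_of_nonneg hcoef]
    calc |ε * (log g₁ - log g₂) - M * ((g₁ ^ 2)⁻¹ - (g₂ ^ 2)⁻¹)|
        ≤ ε * |log g₁ - log g₂| + K * (2 * (α ^ 2)⁻¹ * |log g₁ - log g₂|) := by
          refine (abs_sub _ _).trans ?_
          rw [abs_mul, abs_mul, abs_of_nonneg hε]
          gcongr
          simpa using hΔ
      _ ≤ (2 * K + ε) * α⁻¹ ^ 2 * |log g₁ - log g₂| := by
          rw [inv_pow]
          nlinarith [mul_le_mul_of_nonneg_left hα₁ (mul_nonneg hε (abs_nonneg (log g₁ - log g₂)))]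

lemma sum_sq_sub_gradF_column_le {n m : ℕ} (C : Mat n m) {ε α g₁ g₂ : ℝ} (hε : 0 ≤ ε)
    (hα : 0 < α) {q₁ q₂ : Fin n → ℝ} {r₁ r₂ : Fin m → ℝ} (hq₁ : IsPosColumn α g₁ q₁)
    (hq₂ : IsPosColumn α g₂ q₂) (hr₁ : IsPosColumn α g₁ r₁) (hr₂ : IsPosColumn α g₂ r₂) :
    ∑ i, ((C *ᵥ r₁) i * g₁⁻¹ + ε * log (q₁ i) - ((C *ᵥ r₂) i * g₂⁻¹ + ε * log (q₂ i))) ^ 2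
      + ∑ j, ((Cᵀ *ᵥ q₁) j * g₁⁻¹ + ε * log (r₁ j) - ((Cᵀ *ᵥ q₂) j * g₂⁻¹ + ε * log (r₂ j))) ^ 2
      + (-(q₁ ᵥ* C ⬝ᵥ r₁) / g₁ ^ 2 + ε * log g₁ - (-(q₂ ᵥ* C ⬝ᵥ r₂) / g₂ ^ 2 + ε * log g₂)) ^ 2
    ≤ 3 * (2 * specNorm C ^ 2 / α ^ 4 + ((ε + 2 * specNorm C) / α ^ 3) ^ 2) *
      (∑ i, (log (q₁ i) - log (q₂ i)) ^ 2 + ∑ j, (log (r₁ j) - log (r₂ j)) ^ 2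
        + (log g₁ - log g₂) ^ 2) := by
  have hQ := sum_sq_sub_gradQ_column_le C (ε := ε) hα q₁ q₂ hr₁ hr₂
  have hR := sum_sq_sub_gradQ_column_le Cᵀ (ε := ε) hα r₁ r₂ hq₁ hq₂
  have hG := sq_sub_gradG_column_le C hε hα hq₁ hq₂ hr₁ hr₂
  rw [specNorm_transpose] at hR
  set K := specNorm C
  set β := α⁻¹
  have hK : 0 ≤ K := specNorm_nonneg C
  have hβ : 1 ≤ β := (one_le_inv₀ hα).2 (hq₁.le_mass.trans hq₁.mass_le_one)
  have hL : 2 * K ^ 2 / α ^ 4 + ((ε + 2 * K) / α ^ 3) ^ 2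
      = 2 * K ^ 2 * β ^ 4 + (ε + 2 * K) ^ 2 * β ^ 6 := by
    simp only [β, div_eq_mul_inv, mul_pow, inv_pow, ← pow_mul]
  have hβ2 : β ^ 2 ≤ β ^ 4 := pow_le_pow_right₀ hβ (by norm_num)
  have hβ4 : β ^ 4 ≤ β ^ 6 := pow_le_pow_right₀ hβ (by norm_num)
  have hβ6 : 1 ≤ β ^ 6 := one_le_pow₀ hβ
  have hε2 : ε ^ 2 ≤ (ε + 2 * K) ^ 2 * β ^ 6 := by nlinarith
  have hKβ : K ^ 2 * β ^ 2 ≤ K ^ 2 * β ^ 4 := by gcongr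
  have hεβ : (2 * K + ε) ^ 2 * β ^ 4 ≤ (ε + 2 * K) ^ 2 * β ^ 6 := by rw [add_comm]; gcongr
  rw [hL]
  calc _ ≤ 3 * ((ε ^ 2 + K ^ 2 * β ^ 2 + K ^ 2 * β ^ 2) * ∑ i, (log (q₁ i) - log (q₂ i)) ^ 2
        + (K ^ 2 * β ^ 2 + ε ^ 2 + K ^ 2 * β ^ 4) * ∑ j, (log (r₁ j) - log (r₂ j)) ^ 2
        + (K ^ 2 * β ^ 2 + K ^ 2 * β ^ 2 + (2 * K + ε) ^ 2 * β ^ 4) * (log g₁ - log g₂) ^ 2) := by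
        linarith
    _ ≤ 3 * ((2 * K ^ 2 * β ^ 4 + (ε + 2 * K) ^ 2 * β ^ 6) * ∑ i, (log (q₁ i) - log (q₂ i)) ^ 2
        + (2 * K ^ 2 * β ^ 4 + (ε + 2 * K) ^ 2 * β ^ 6) * ∑ j, (log (r₁ j) - log (r₂ j)) ^ 2
        + (2 * K ^ 2 * β ^ 4 + (ε + 2 * K) ^ 2 * β ^ 6) * (log g₁ - log g₂) ^ 2) := by
        gcongr 3 * (?_ * _ + ?_ * _ + ?_ * _) <;> linarith
    _ = _ := by ring

lemma tripleNormSq_eq_sum_column {n m r : ℕ} (x : LRTriple n m r) :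
    tripleNormSq x = ∑ k, (∑ i, x.1 i k ^ 2 + ∑ j, x.2.1 j k ^ 2 + x.2.2 k ^ 2) := by
  rw [tripleNormSq, sum_comm (f := fun i k => x.1 i k ^ 2),
    sum_comm (f := fun j k => x.2.1 j k ^ 2), sum_add_distrib, sum_add_distrib]

lemma isPosColumn_of_mem_CsetAlpha {n m r : ℕ} {a : Fin n → ℝ} {b : Fin m → ℝ} {α : ℝ}
    (ha : ∑ i, a i = 1) (hα : 0 < α) {x : LRTriple n m r} (hx : x ∈ CsetAlpha a b r α)
    (hQ : ∀ i k, 0 < x.1 i k) (hR : ∀ j k, 0 < x.2.1 j k) (k : Fin r) :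
    IsPosColumn α (x.2.2 k) (fun i => x.1 i k) ∧ IsPosColumn α (x.2.2 k) (fun j => x.2.1 j k) := by
  obtain ⟨⟨-, -, hgα, hQrow, -⟩, ⟨-, -, -, hQcol, hRcol⟩⟩ := hx
  have hmass : ∑ k, x.2.2 k = 1 := by
    simp_rw [← hQcol]
    rw [sum_comm]
    simp_rw [hQrow]
    exact ha
  have hg_le : x.2.2 k ≤ 1 :=
    hmass ▸ single_le_sum (fun k _ => (hα.trans_le (hgα k)).le) (mem_univ k)
  exact ⟨⟨(hQ · k), hQcol k, hgα k, hg_le⟩, ⟨(hR · k), hRcol k, hgα k, hg_le⟩⟩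

theorem gradF_relative_lipschitz_general {n m : ℕ} (r : ℕ)
    (a : Fin n → ℝ) (ha : a ∈ posSimplex n)
    (b : Fin m → ℝ)
    (C : Mat n m) (ε : ℝ) (hε : 0 ≤ ε)
    (α : ℝ) (hα : 0 < α)
    (L : ℝ)
    (hL : L = Real.sqrt (3 * (2 * specNorm C ^ 2 / α ^ 4 +
      ((ε + 2 * specNorm C) / α ^ 3) ^ 2)))
    (x₁ x₂ : LRTriple n m r)
    (hx₁ : x₁ ∈ CsetAlpha a b r α) (hx₂ : x₂ ∈ CsetAlpha a b r α)
    (hpos₁ : (∀ i j, 0 < x₁.1 i j) ∧ (∀ i j, 0 < x₁.2.1 i j) ∧ ∀ i, 0 < x₁.2.2 i)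
    (hpos₂ : (∀ i j, 0 < x₂.1 i j) ∧ (∀ i j, 0 < x₂.2.1 i j) ∧ ∀ i, 0 < x₂.2.2 i) :
    Real.sqrt (tripleNormSq (gradF C ε x₁ - gradF C ε x₂)) ≤
      L * Real.sqrt (tripleNormSq (logTriple x₁ - logTriple x₂)) := by
  have hcol₁ := isPosColumn_of_mem_CsetAlpha ha.2 hα hx₁ hpos₁.1 hpos₁.2.1
  have hcol₂ := isPosColumn_of_mem_CsetAlpha ha.2 hα hx₂ hpos₂.1 hpos₂.2.1
  have hsq : tripleNormSq (gradF C ε x₁ - gradF C ε x₂) ≤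
      L ^ 2 * tripleNormSq (logTriple x₁ - logTriple x₂) := by
    rw [hL, sq_sqrt (by positivity), tripleNormSq_eq_sum_column, tripleNormSq_eq_sum_column,
      mul_sum]
    exact sum_le_sum fun k _ => sum_sq_sub_gradF_column_le C hε hα
      (hcol₁ k).1 (hcol₂ k).1 (hcol₁ k).2 (hcol₂ k).2
  calc √(tripleNormSq (gradF C ε x₁ - gradF C ε x₂))
      ≤ √(L ^ 2 * tripleNormSq (logTriple x₁ - logTriple x₂)) := sqrt_le_sqrt hsq
    _ = L * √(tripleNormSq (logTriple x₁ - logTriple x₂)) := by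
      rw [sqrt_mul' _ (by unfold tripleNormSq; positivity), sqrt_sq (hL ▸ sqrt_nonneg _)]

/-- Relative Lipschitz bound for the gradient of `F_ε` on `𝒞(a,b,r,α)`:
`‖∇F_ε(ξ₁) − ∇F_ε(ξ₂)‖₂ ≤ L_{ε,α} ‖log ξ₁ − log ξ₂‖₂` with
`L_{ε,α} = sqrt(3 (2‖C‖₂²/α⁴ + ((ε + 2‖C‖₂)/α³)²))`. -/
theorem gradF_relative_lipschitz {n m : ℕ} (r : ℕ) (hr : 1 ≤ r)
    (a : Fin n → ℝ) (ha : a ∈ posSimplex n)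
    (b : Fin m → ℝ) (hb : b ∈ posSimplex m)
    (C : Mat n m) (ε : ℝ) (hε : 0 ≤ ε)
    (α : ℝ) (hα : 0 < α) (hα' : α ≤ 1 / (r : ℝ))
    (L : ℝ)
    (hL : L = Real.sqrt (3 * (2 * specNorm C ^ 2 / α ^ 4 +
      ((ε + 2 * specNorm C) / α ^ 3) ^ 2)))
    (x₁ x₂ : LRTriple n m r)
    (hx₁ : x₁ ∈ CsetAlpha a b r α) (hx₂ : x₂ ∈ CsetAlpha a b r α)
    (hpos₁ : (∀ i j, 0 < x₁.1 i j) ∧ (∀ i j, 0 < x₁.2.1 i j) ∧ ∀ i, 0 < x₁.2.2 i)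
    (hpos₂ : (∀ i j, 0 < x₂.1 i j) ∧ (∀ i j, 0 < x₂.2.1 i j) ∧ ∀ i, 0 < x₂.2.2 i) :
    Real.sqrt (tripleNormSq (gradF C ε x₁ - gradF C ε x₂)) ≤
      L * Real.sqrt (tripleNormSq (logTriple x₁ - logTriple x₂)) :=
  gradF_relative_lipschitz_general r a ha b C ε hε α hα L hL x₁ x₂ hx₁ hx₂ hpos₁ hpos₂
end
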